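/- arXiv:1011.5585 — 5 statements merged into one kernel-verified Lean document; each statement's English description precedes it below -/
import Mathlib

section
/- Fix a nonnegative integer n and real numbers 0<q<1, a, b, c with a≠0, (qa;q)_n ≠ 0, (qb;q)_n ≠ 0 and (qc;q)_n ≠ 0. Then for every real x, the rescaled q-Racah polynomials converge as N→∞ (N ranging over integers with N ≥ n) to the normalized big q-Jacobi polynomial: lim_{N→∞} R_n( x/(q^{N+1}a) ; b, a, q^{−N−1}, c/a | q ) = P_n(x;a,b,c;q) / P_n(qc;a,b,c;q). -/
open Filter Topology Asymptotics

/-- The `q`-shifted factorial `(z;q)_k = ∏_{j=0}^{k-1} (1 - z q^j)`. -/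
noncomputable def qPoch (q z : ℝ) (k : ℕ) : ℝ :=
  ∏ j ∈ Finset.range k, (1 - z * q ^ j)

/-- The rising factorial (Pochhammer symbol) `(z)_k = z (z+1) ⋯ (z+k-1)`. -/
noncomputable def poch (z : ℝ) (k : ℕ) : ℝ :=
  ∏ j ∈ Finset.range k, (z + (j : ℝ))

/-- The big `q`-Jacobi polynomial `P_n(x;a,b,c;q)`. -/
noncomputable def bigQJacobi (q a b c : ℝ) (n : ℕ) (x : ℝ) : ℝ :=
  ∑ k ∈ Finset.range (n + 1),
    qPoch q ((q : ℝ) ^ (-(n : ℤ))) k * qPoch q (q ^ (n + 1) * a * b) k *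
      qPoch q x k * q ^ k /
      (qPoch q (q * a) k * qPoch q (q * c) k * qPoch q q k)

/-- The `q`-Racah polynomial `R_n(x; α, β, q^{-N-1}, δ | q)`, written as a polynomial in `x`. -/
noncomputable def qRacahPoly (q α β δ : ℝ) (N : ℕ) (n : ℕ) (x : ℝ) : ℝ :=
  ∑ k ∈ Finset.range (n + 1),
    qPoch q ((q : ℝ) ^ (-(n : ℤ))) k * qPoch q (q ^ (n + 1) * α * β) k * q ^ k /
      (qPoch q (q * α) k * qPoch q (q * β * δ) k * qPoch q q k) *
      ∏ j ∈ Finset.range k,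
        (1 - q ^ j * x + (q : ℝ) ^ (2 * (j : ℤ) - (N : ℤ)) * δ) /
          (1 - (q : ℝ) ^ ((j : ℤ) - (N : ℤ)))

/-- The `q`-Hahn polynomial `Q_n(X; α, β, N; q)`, written as a polynomial in `X`. -/
noncomputable def qHahn (q α β : ℝ) (N : ℕ) (n : ℕ) (X : ℝ) : ℝ :=
  ∑ k ∈ Finset.range (n + 1),
    qPoch q ((q : ℝ) ^ (-(n : ℤ))) k * qPoch q (q ^ (n + 1) * α * β) k *
      qPoch q X k * q ^ k /
      (qPoch q (q * α) k * qPoch q ((q : ℝ) ^ (-(N : ℤ))) k * qPoch q q k)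

/-- The little `q`-Jacobi polynomial `p_n(x; a, b; q)`. -/
noncomputable def littleQJacobi (q a b : ℝ) (n : ℕ) (x : ℝ) : ℝ :=
  ∑ k ∈ Finset.range (n + 1),
    qPoch q ((q : ℝ) ^ (-(n : ℤ))) k * qPoch q (a * b * q ^ (n + 1)) k /
      (qPoch q (a * q) k * qPoch q q k) * (q * x) ^ k

/-- The Askey–Wilson polynomial `p_n(x; a, b, c, d | q)`, written as a polynomial in `x`. -/
noncomputable def askeyWilson (q a b c d : ℝ) (n : ℕ) (x : ℝ) : ℝ :=
  a ^ (-(n : ℤ)) * qPoch q (a * b) n * qPoch q (a * c) n * qPoch q (a * d) n *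
    ∑ k ∈ Finset.range (n + 1),
      qPoch q ((q : ℝ) ^ (-(n : ℤ))) k *
        qPoch q (a * b * c * d * (q : ℝ) ^ ((n : ℤ) - 1)) k * q ^ k /
        (qPoch q (a * b) k * qPoch q (a * c) k * qPoch q (a * d) k * qPoch q q k) *
        ∏ j ∈ Finset.range k, (1 - 2 * a * q ^ j * x + a ^ 2 * q ^ (2 * j))

/-- The Wilson polynomial `W_n(x; a, b, c, d)`, written as a polynomial in `x`. -/
noncomputable def wilson (a b c d : ℝ) (n : ℕ) (x : ℝ) : ℝ :=
  poch (a + b) n * poch (a + c) n * poch (a + d) n *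
    ∑ k ∈ Finset.range (n + 1),
      poch (-(n : ℝ)) k * poch ((n : ℝ) + a + b + c + d - 1) k /
        (poch (a + b) k * poch (a + c) k * poch (a + d) k * (Nat.factorial k : ℝ)) *
        ∏ j ∈ Finset.range k, ((a + (j : ℝ)) ^ 2 + x)

/-- The Racah polynomial `R_n(x; α, β, -N-1, δ)`, written as a polynomial in `x`. -/
noncomputable def racah (α β δ : ℝ) (N : ℕ) (n : ℕ) (x : ℝ) : ℝ :=
  ∑ k ∈ Finset.range (n + 1),
    poch (-(n : ℝ)) k * poch ((n : ℝ) + α + β + 1) k /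
      (poch (α + 1) k * poch (β + δ + 1) k * poch (-(N : ℝ)) k * (Nat.factorial k : ℝ)) *
      ∏ j ∈ Finset.range k, ((j : ℝ) * (δ - (N : ℝ) + (j : ℝ)) - x)

/-- The Hahn polynomial `Q_n(x; α, β, N)`. -/
noncomputable def hahn (α β : ℝ) (N : ℕ) (n : ℕ) (x : ℝ) : ℝ :=
  ∑ k ∈ Finset.range (n + 1),
    poch (-(n : ℝ)) k * poch ((n : ℝ) + α + β + 1) k * poch (-x) k /
      (poch (α + 1) k * poch (-(N : ℝ)) k * (Nat.factorial k : ℝ))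


namespace QR
open Finset


lemma qPoch_succ (q z : ℝ) (k : ℕ) : qPoch q z (k+1) = qPoch q z k * (1 - z * q ^ k) :=
  Finset.prod_range_succ _ _

lemma qPoch_succ' (q z : ℝ) (k : ℕ) : qPoch q z (k+1) = (1 - z) * qPoch q (z*q) k := by
  rw [qPoch, Finset.prod_range_succ']
  simp only [pow_zero, mul_one, qPoch]
  rw [mul_comm]
  congr 1
  exact Finset.prod_congr rfl fun j _ => by ring

lemma qPoch_add (q z : ℝ) (m k : ℕ) :
    qPoch q z (m+k) = qPoch q z m * qPoch q (z * q^m) k := by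
  rw [qPoch, Finset.prod_range_add]
  congr 1
  exact Finset.prod_congr rfl fun j _ => by rw [pow_add]; ring

lemma qq_pos {q : ℝ} (hq0 : 0 < q) (hq1 : q < 1) (k : ℕ) : 0 < qPoch q q k := by
  rw [qPoch]
  refine Finset.prod_pos fun j _ => ?_
  have h1 : q * q ^ j ≤ q * 1 :=
    mul_le_mul_of_nonneg_left (pow_le_one₀ hq0.le hq1.le) hq0.le
  nlinarith

lemma qq_ne {q : ℝ} (hq0 : 0 < q) (hq1 : q < 1) (k : ℕ) : qPoch q q k ≠ 0 :=
  (qq_pos hq0 hq1 k).ne'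

lemma one_sub_q_pow_ne {q : ℝ} (hq0 : 0 < q) (hq1 : q < 1) (k : ℕ) : (1 : ℝ) - q * q ^ k ≠ 0 := by
  have h1 : q * q ^ k ≤ q * 1 :=
    mul_le_mul_of_nonneg_left (pow_le_one₀ hq0.le hq1.le) hq0.le
  nlinarith

lemma qPoch_ne_left {q z : ℝ} {m k : ℕ} (h : qPoch q z (m+k) ≠ 0) : qPoch q z m ≠ 0 := by
  rw [qPoch_add] at h
  exact left_ne_zero_of_mul h

lemma qPoch_ne_right {q z : ℝ} {m k : ℕ} (h : qPoch q z (m+k) ≠ 0) : qPoch q (z*q^m) k ≠ 0 := by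
  rw [qPoch_add] at h
  exact right_ne_zero_of_mul h

lemma qPoch_ne_of_le {q z : ℝ} {i r : ℕ} (h : qPoch q z r ≠ 0) (hir : i ≤ r) :
    qPoch q z i ≠ 0 := by
  obtain ⟨u, rfl⟩ := Nat.exists_eq_add_of_le hir
  exact qPoch_ne_left h

lemma qPoch_neg_self {q : ℝ} (hq : q ≠ 0) (r : ℕ) :
    qPoch q ((q : ℝ) ^ (-(r:ℤ))) (r+1) = 0 := by
  rw [qPoch_succ]
  have h : (q : ℝ) ^ (-(r:ℤ)) * q ^ r = 1 := by
    rw [← zpow_natCast q r, ← zpow_add₀ hq]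
    simp
  rw [h]
  ring

/-- q-Chu–Vandermonde. -/
lemma vander {q : ℝ} (hq0 : 0 < q) (hq1 : q < 1) :
    ∀ (r : ℕ) (B D : ℝ), qPoch q D r ≠ 0 →
    ∑ i ∈ range (r+1),
        qPoch q ((q:ℝ)^(-(r:ℤ))) i * qPoch q B i * q^i / (qPoch q D i * qPoch q q i)
      = (∏ j ∈ range r, (B - D * q^j)) / qPoch q D r := by
  have hq : q ≠ 0 := hq0.ne'
  intro r
  induction r with
  | zero =>
    intro B D hD
    simp [qPoch]
  | succ r IH =>
    intro B D hD
    have hDr : qPoch q D r ≠ 0 := by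
      rw [qPoch_succ] at hD; exact left_ne_zero_of_mul hD
    have h1Dq : (1:ℝ) - D * q ^ r ≠ 0 := by
      rw [qPoch_succ] at hD; exact right_ne_zero_of_mul hD
    have h1D : (1:ℝ) - D ≠ 0 := by
      rw [qPoch_succ'] at hD; exact left_ne_zero_of_mul hD
    have hDq : qPoch q (D*q) r ≠ 0 := by
      rw [qPoch_succ'] at hD; exact right_ne_zero_of_mul hD
    -- termwise reduction
    have key : ∀ i ∈ range (r+1),
        qPoch q ((q:ℝ)^(-((r:ℤ)+1))) (i+1) * qPoch q B (i+1) * q^(i+1) /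
          (qPoch q D (i+1) * qPoch q q (i+1))
        = qPoch q ((q:ℝ)^(-(r:ℤ))) (i+1) * qPoch q B (i+1) * q^(i+1) /
            (qPoch q D (i+1) * qPoch q q (i+1))
          - (q^r)⁻¹ * ((1-B)/(1-D)) *
            (qPoch q ((q:ℝ)^(-(r:ℤ))) i * qPoch q (B*q) i * q^i /
              (qPoch q (D*q) i * qPoch q q i)) := by
      intro i hi
      rw [mem_range] at hi
      have hZ : qPoch q (D*q) i ≠ 0 := qPoch_ne_of_le hDq (by omega)
      have hW : qPoch q q i ≠ 0 := qq_ne hq0 hq1 i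
      have h1q : (1:ℝ) - q * q ^ i ≠ 0 := one_sub_q_pow_ne hq0 hq1 i
      have e1 : (q:ℝ)^(-((r:ℤ)+1)) * q = (q:ℝ)^(-(r:ℤ)) := by
        rw [show (-((r:ℤ)+1)) = (-(r:ℤ)) + (-1) by ring, zpow_add₀ hq, zpow_neg_one]
        field_simp
      rw [qPoch_succ' q ((q:ℝ)^(-((r:ℤ)+1)))]
      rw [e1]
      rw [qPoch_succ q ((q:ℝ)^(-(r:ℤ))) i]
      rw [qPoch_succ' q B, qPoch_succ' q D, qPoch_succ q q]
      have e2 : (q:ℝ)^(-((r:ℤ)+1)) = (q^(r+1))⁻¹ := by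
        rw [show -((r:ℤ)+1) = -(((r+1:ℕ)):ℤ) by push_cast; ring, zpow_neg, zpow_natCast]
      have e3 : (q:ℝ)^(-(r:ℤ)) = (q^r)⁻¹ := by rw [zpow_neg, zpow_natCast]
      rw [e2, e3]
      have hpr : (q:ℝ)^r ≠ 0 := pow_ne_zero _ hq
      have hpr1 : (q:ℝ)^(r+1) ≠ 0 := pow_ne_zero _ hq
      field_simp
      ring
    -- sum manipulation
    have hcast : ((r:ℤ)+1) = ((r+1:ℕ):ℤ) := by push_cast; ring
    calc ∑ i ∈ range (r+1+1),
          qPoch q ((q:ℝ)^(-((r+1:ℕ):ℤ))) i * qPoch q B i * q^i /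
            (qPoch q D i * qPoch q q i)
        = ∑ i ∈ range (r+1),
            qPoch q ((q:ℝ)^(-((r:ℤ)+1))) (i+1) * qPoch q B (i+1) * q^(i+1) /
              (qPoch q D (i+1) * qPoch q q (i+1)) + 1 := by
          rw [show ((q:ℝ)^(-((r+1:ℕ):ℤ))) = (q:ℝ)^(-((r:ℤ)+1)) by norm_num]
          rw [Finset.sum_range_succ']
          norm_num [qPoch]
      _ = ∑ i ∈ range (r+1),
            (qPoch q ((q:ℝ)^(-(r:ℤ))) (i+1) * qPoch q B (i+1) * q^(i+1) /
              (qPoch q D (i+1) * qPoch q q (i+1))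
            - (q^r)⁻¹ * ((1-B)/(1-D)) *
              (qPoch q ((q:ℝ)^(-(r:ℤ))) i * qPoch q (B*q) i * q^i /
                (qPoch q (D*q) i * qPoch q q i))) + 1 := by
          rw [Finset.sum_congr rfl key]
      _ = (∑ i ∈ range (r+1),
            qPoch q ((q:ℝ)^(-(r:ℤ))) (i+1) * qPoch q B (i+1) * q^(i+1) /
              (qPoch q D (i+1) * qPoch q q (i+1)) + 1)
          - (q^r)⁻¹ * ((1-B)/(1-D)) *
            ∑ i ∈ range (r+1),
              qPoch q ((q:ℝ)^(-(r:ℤ))) i * qPoch q (B*q) i * q^i /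
                (qPoch q (D*q) i * qPoch q q i) := by
          rw [Finset.sum_sub_distrib, ← Finset.mul_sum]
          ring
      _ = (∑ i ∈ range (r+1+1),
            qPoch q ((q:ℝ)^(-(r:ℤ))) i * qPoch q B i * q^i /
              (qPoch q D i * qPoch q q i))
          - (q^r)⁻¹ * ((1-B)/(1-D)) *
            ((∏ j ∈ range r, (B*q - (D*q) * q^j)) / qPoch q (D*q) r) := by
          rw [Finset.sum_range_succ' (fun i => qPoch q ((q:ℝ)^(-(r:ℤ))) i * qPoch q B i * q^i /
              (qPoch q D i * qPoch q q i)) (r+1)]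
          rw [IH (B*q) (D*q) hDq]
          simp [qPoch]
      _ = (∏ j ∈ range (r+1), (B - D * q^j)) / qPoch q D (r+1) := by
          rw [Finset.sum_range_succ]
          rw [qPoch_neg_self hq r]
          rw [IH B D hDr]
          have hW' : (∏ j ∈ range r, (B*q - (D*q) * q^j)) = q^r * ∏ j ∈ range r, (B - D*q^j) := by
            calc ∏ j ∈ range r, (B*q - (D*q) * q^j)
                = ∏ j ∈ range r, (q * (B - D*q^j)) :=
                  Finset.prod_congr rfl fun j _ => by ring
              _ = (∏ _j ∈ range r, q) * ∏ j ∈ range r, (B - D*q^j) :=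
                  Finset.prod_mul_distrib
              _ = q^r * ∏ j ∈ range r, (B - D*q^j) := by
                  rw [Finset.prod_const, Finset.card_range]
          have hsub : qPoch q (D*q) r = qPoch q D r * (1 - D*q^r) / (1-D) := by
            have h2 : (1-D) * qPoch q (D*q) r = qPoch q D r * (1 - D*q^r) := by
              rw [← qPoch_succ', ← qPoch_succ]
            field_simp [h1D]
            linarith [h2]
          rw [hW', hsub, Finset.prod_range_succ, qPoch_succ q D r]
          have hpr : (q:ℝ)^r ≠ 0 := pow_ne_zero _ hq
          field_simp
          ring


noncomputable def ss (q : ℝ) (m : ℕ) : ℝ := ∏ j ∈ range m, (-q^j)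

noncomputable def ee (q c x : ℝ) (m : ℕ) : ℝ := ∏ j ∈ range m, (x - q^(j+1)*c)

noncomputable def dd (q c : ℝ) (k m : ℕ) : ℝ :=
  ss q m * (qPoch q q k / (qPoch q q m * qPoch q q (k-m))) * qPoch q (q^(m+1)*c) (k-m)

lemma ss_succ (q : ℝ) (m : ℕ) : ss q (m+1) = ss q m * (-q^m) := Finset.prod_range_succ _ _

lemma ee_succ (q c x : ℝ) (m : ℕ) : ee q c x (m+1) = ee q c x m * (x - q^(m+1)*c) :=
  Finset.prod_range_succ _ _

/-- Newton-type expansion of `(x;q)_k` at the nodes `q^{m+1} c`. -/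
lemma qPoch_zero (q z : ℝ) : qPoch q z 0 = 1 := by simp [qPoch]

lemma expandE {q : ℝ} (hq0 : 0 < q) (hq1 : q < 1) (c : ℝ) :
    ∀ (k : ℕ) (x : ℝ), qPoch q x k = ∑ m ∈ range (k+1), dd q c k m * ee q c x m := by
  intro k
  induction k with
  | zero => intro x; simp [qPoch, dd, ee, ss]
  | succ k IH =>
    intro x
    have h0 : dd q c (k+1) 0 = dd q c k 0 * (1 - q^(k+0+1)*c) := by
      simp only [dd, ss, Finset.range_zero, Finset.prod_empty, Nat.sub_zero, one_mul,
        qPoch_zero]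
      rw [div_self (qq_ne hq0 hq1 (k+1)), div_self (qq_ne hq0 hq1 k), one_mul, one_mul,
        qPoch_succ]
      ring
    have htop : dd q c (k+1) (k+1) = -(q^k * dd q c k k) := by
      simp only [dd, Nat.sub_self, ss_succ, qPoch_zero]
      rw [mul_one (qPoch q q (k+1)), mul_one (qPoch q q k), div_self (qq_ne hq0 hq1 (k+1)),
        div_self (qq_ne hq0 hq1 k)]
      ring
    have hmid : ∀ m ∈ range k, dd q c (k+1) (m+1)
        = dd q c k (m+1) * (1 - q^(k+(m+1)+1)*c) - q^k * dd q c k m := by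
      intro m hm
      rw [mem_range] at hm
      obtain ⟨j, hk⟩ : ∃ j, k = m + 1 + j := ⟨k - m - 1, by omega⟩
      subst hk
      simp only [dd]
      rw [show m + 1 + j + 1 - (m+1) = j + 1 by omega,
          show m + 1 + j - (m+1) = j by omega,
          show m + 1 + j - m = j + 1 by omega]
      rw [ss_succ]
      rw [qPoch_succ q q (m+1+j), qPoch_succ q q m, qPoch_succ q q j]
      rw [qPoch_succ q (q^(m+1+1)*c) j]
      rw [qPoch_succ' q (q^(m+1)*c) j, show q^(m+1)*c*q = q^(m+1+1)*c by ring]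
      have h1m := one_sub_q_pow_ne hq0 hq1 m
      have h1j := one_sub_q_pow_ne hq0 hq1 j
      have hM := qq_ne hq0 hq1 m
      have hJ := qq_ne hq0 hq1 j
      field_simp
      ring_nf
      field_simp
      ring
    rw [qPoch_succ, IH]
    have he : ∀ m : ℕ, ee q c x m * (1 - x*q^k)
        = (1 - q^(k+m+1)*c) * ee q c x m - q^k * ee q c x (m+1) := by
      intro m
      rw [ee_succ]
      ring
    have hS : ∑ m ∈ range k, dd q c (k+1) (m+1) * ee q c x (m+1)
        = ∑ m ∈ range k, dd q c k (m+1) * ((1 - q^(k+(m+1)+1)*c) * ee q c x (m+1))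
          - ∑ m ∈ range k, q^k * (dd q c k m * ee q c x (m+1)) := by
      rw [← Finset.sum_sub_distrib]
      refine Finset.sum_congr rfl fun m hm => ?_
      rw [hmid m hm]
      ring
    calc (∑ m ∈ range (k+1), dd q c k m * ee q c x m) * (1 - x*q^k)
        = ∑ m ∈ range (k+1), (dd q c k m * ((1 - q^(k+m+1)*c) * ee q c x m)
            - q^k * (dd q c k m * ee q c x (m+1))) := by
          rw [Finset.sum_mul]
          exact Finset.sum_congr rfl fun m _ => by rw [mul_assoc, he m]; ring
      _ = ∑ m ∈ range (k+1), dd q c k m * ((1 - q^(k+m+1)*c) * ee q c x m)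
          - ∑ m ∈ range (k+1), q^k * (dd q c k m * ee q c x (m+1)) := by
          rw [Finset.sum_sub_distrib]
      _ = ∑ m ∈ range (k+1+1), dd q c (k+1) m * ee q c x m := by
          rw [Finset.sum_range_succ' (fun m => dd q c (k+1) m * ee q c x m) (k+1)]
          rw [Finset.sum_range_succ (fun m => dd q c (k+1) (m+1) * ee q c x (m+1)) k]
          rw [Finset.sum_range_succ' (fun m => dd q c k m * ((1 - q^(k+m+1)*c) * ee q c x m)) k]
          rw [Finset.sum_range_succ (fun m => q^k * (dd q c k m * ee q c x (m+1))) k]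
          rw [hS, h0, htop]
          ring


lemma sum_triangle (n : ℕ) (f : ℕ → ℕ → ℝ) :
    ∑ k ∈ range n, ∑ m ∈ range (k+1), f k m
      = ∑ m ∈ range n, ∑ k ∈ Ico m n, f k m := by
  induction n with
  | zero => simp
  | succ n IH =>
    have h1 : ∀ m ∈ range n, ∑ k ∈ Ico m (n+1), f k m = ∑ k ∈ Ico m n, f k m + f n m := by
      intro m hm
      rw [mem_range] at hm
      exact Finset.sum_Ico_succ_top hm.le _
    have h2 : Finset.Ico n (n+1) = {n} := by
      rw [Finset.Ico_add_one_right_eq_Icc, Finset.Icc_self]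
    calc ∑ k ∈ range (n+1), ∑ m ∈ range (k+1), f k m
        = (∑ k ∈ range n, ∑ m ∈ range (k+1), f k m) + ∑ m ∈ range (n+1), f n m :=
          Finset.sum_range_succ _ _
      _ = (∑ m ∈ range n, ∑ k ∈ Ico m n, f k m) + (∑ m ∈ range n, f n m + f n n) := by
          rw [IH, Finset.sum_range_succ]
      _ = (∑ m ∈ range n, (∑ k ∈ Ico m n, f k m + f n m)) + f n n := by
          rw [Finset.sum_add_distrib]; ring
      _ = (∑ m ∈ range n, ∑ k ∈ Ico m (n+1), f k m) + ∑ k ∈ Ico n (n+1), f k n := by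
          rw [Finset.sum_congr rfl h1, h2, Finset.sum_singleton]
      _ = ∑ m ∈ range (n+1), ∑ k ∈ Ico m (n+1), f k m :=
          (Finset.sum_range_succ _ _).symm

/-- Factorization of products `∏ (a b q^{u+1} - q a q^j)`. -/
lemma prodPB (q a b : ℝ) (u k : ℕ) (hk : k ≤ u + 1) :
    ∏ j ∈ range k, (a*b*q^(u+1) - q*a*q^j)
      = (∏ j ∈ range k, -(q*a*q^j)) * qPoch q (b*q^(u+1-k)) k := by
  have h1 : ∀ j ∈ range k, a*b*q^(u+1) - q*a*q^j = -(q*a*q^j) * (1 - b*q^(u-j)) := by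
    intro j hj
    rw [mem_range] at hj
    have hj' : j ≤ u := by omega
    have h : q^(u-j) * q^j = q^u := pow_sub_mul_pow q hj'
    have hq : q^(u-j) * q^j * q = q^(u+1) := by rw [h, pow_succ]
    have expand : -(q*a*q^j) * (1 - b*q^(u-j)) = a*b*(q^(u-j)*q^j*q) - q*a*q^j := by ring
    rw [expand, hq]
  rw [Finset.prod_congr rfl h1, Finset.prod_mul_distrib]
  congr 1
  rw [qPoch, ← Finset.prod_range_reflect (fun j => 1 - b*q^(u+1-k)*q^j) k]
  refine Finset.prod_congr rfl fun j hj => ?_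
  rw [mem_range] at hj
  have h : (u+1-k)+(k-1-j) = u - j := by omega
  rw [mul_assoc, ← pow_add, h]


lemma step2 {q a b c : ℝ} (hq0 : 0 < q) (hq1 : q < 1) (ha : a ≠ 0)
    (m r : ℕ) (hqa : qPoch q (q*a) (m+r) ≠ 0) (hqb : qPoch q (q*b) (m+r) ≠ 0)
    (hqc : qPoch q (q*c) (m+r) ≠ 0) :
    ∑ i ∈ range (r+1),
      qPoch q ((q:ℝ)^(-((m+r:ℕ):ℤ))) (m+i) * qPoch q (q^(m+r+1)*a*b) (m+i) * q^(m+i) /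
        (qPoch q (q*a) (m+i) * qPoch q (q*c) (m+i) * qPoch q q (m+i)) * dd q c (m+i) m
    = ((∏ j ∈ range (m+r), (q^(m+r+1)*a*b - (q*a) * q^j)) / qPoch q (q*a) (m+r))
      * (qPoch q ((q:ℝ)^(-((m+r:ℕ):ℤ))) m * qPoch q (q^(m+r+1)*a*b) m * q^m /
          (qPoch q (q*b) m * qPoch q (q*c) m * qPoch q q m * (q*a)^m)) := by
  have hq : q ≠ 0 := hq0.ne'
  have hqam : qPoch q (q*a) m ≠ 0 := qPoch_ne_left hqa
  have hqar : qPoch q (q^(m+1)*a) r ≠ 0 := by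
    have h := qPoch_ne_right hqa
    rwa [show (q*a)*q^m = q^(m+1)*a by ring] at h
  have hqcm : qPoch q (q*c) m ≠ 0 := qPoch_ne_left hqc
  have hqcr : qPoch q (q^(m+1)*c) r ≠ 0 := by
    have h := qPoch_ne_right hqc
    rwa [show (q*c)*q^m = q^(m+1)*c by ring] at h
  have hqbm : qPoch q (q*b) m ≠ 0 := qPoch_ne_left hqb
  have hzp : (q:ℝ)^(-((m+r:ℕ):ℤ)) * q^m = (q:ℝ)^(-(r:ℤ)) := by
    rw [← zpow_natCast q m, ← zpow_add₀ hq]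
    congr 1
    push_cast
    ring
  -- termwise factorization
  have hterm : ∀ i ∈ range (r+1),
      qPoch q ((q:ℝ)^(-((m+r:ℕ):ℤ))) (m+i) * qPoch q (q^(m+r+1)*a*b) (m+i) * q^(m+i) /
        (qPoch q (q*a) (m+i) * qPoch q (q*c) (m+i) * qPoch q q (m+i)) * dd q c (m+i) m
      = (ss q m * qPoch q ((q:ℝ)^(-((m+r:ℕ):ℤ))) m * qPoch q (q^(m+r+1)*a*b) m * q^m /
          (qPoch q (q*a) m * qPoch q (q*c) m * qPoch q q m)) *
        (qPoch q ((q:ℝ)^(-(r:ℤ))) i * qPoch q ((q^(m+r+1)*a*b)*q^m) i * q^i /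
          (qPoch q (q^(m+1)*a) i * qPoch q q i)) := by
    intro i hi
    rw [mem_range] at hi
    have hii : i ≤ r := by omega
    have h1 : qPoch q (q^(m+1)*a) i ≠ 0 := qPoch_ne_of_le hqar hii
    have h2 : qPoch q (q^(m+1)*c) i ≠ 0 := qPoch_ne_of_le hqcr hii
    have h3 : qPoch q q i ≠ 0 := qq_ne hq0 hq1 i
    have h4 : qPoch q q m ≠ 0 := qq_ne hq0 hq1 m
    have h5 : qPoch q q (m+i) ≠ 0 := qq_ne hq0 hq1 (m+i)
    rw [dd, show m + i - m = i by omega]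
    rw [qPoch_add q ((q:ℝ)^(-((m+r:ℕ):ℤ))) m i, hzp]
    rw [qPoch_add q (q^(m+r+1)*a*b) m i]
    rw [qPoch_add q (q*a) m i, show (q*a)*q^m = q^(m+1)*a by ring]
    rw [qPoch_add q (q*c) m i, show (q*c)*q^m = q^(m+1)*c by ring]
    rw [pow_add q m i]
    field_simp
  rw [Finset.sum_congr rfl hterm, ← Finset.mul_sum]
  rw [vander hq0 hq1 r ((q^(m+r+1)*a*b)*q^m) (q^(m+1)*a) hqar]
  -- now the scalar identity
  have P1 : ∏ j ∈ range r, ((q^(m+r+1)*a*b)*q^m - (q^(m+1)*a) * q^j)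
      = (∏ j ∈ range r, -(q*a*q^(m+j))) * qPoch q (b*q^(m+1)) r := by
    have e : ∏ j ∈ range r, ((q^(m+r+1)*a*b)*q^m - (q^(m+1)*a) * q^j)
        = ∏ j ∈ range r, ((a*q^m)*b*q^(m+r+1) - q*(a*q^m)*q^j) :=
      Finset.prod_congr rfl fun j _ => by ring
    rw [e, prodPB q (a*q^m) b (m+r) r (by omega), show m+r+1-r = m+1 by omega]
    congr 1
    exact Finset.prod_congr rfl fun j _ => by rw [pow_add]; ring
  have P2 : ∏ j ∈ range (m+r), (q^(m+r+1)*a*b - (q*a) * q^j)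
      = ((∏ j ∈ range m, -(q*a*q^j)) * ∏ j ∈ range r, -(q*a*q^(m+j)))
        * (qPoch q (q*b) m * qPoch q (b*q^(m+1)) r) := by
    have e : ∏ j ∈ range (m+r), (q^(m+r+1)*a*b - (q*a) * q^j)
        = ∏ j ∈ range (m+r), (a*b*q^(m+r+1) - q*a*q^j) :=
      Finset.prod_congr rfl fun j _ => by ring
    rw [e, prodPB q a b (m+r) (m+r) (by omega), show m+r+1-(m+r) = 1 by omega]
    rw [Finset.prod_range_add (fun j => -(q*a*q^j)) m r]
    rw [show b*q^1 = q*b by ring, qPoch_add q (q*b) m r, show (q*b)*q^m = b*q^(m+1) by ring]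
  have P3 : ∏ j ∈ range m, -(q*a*q^j) = ss q m * (q*a)^m := by
    calc ∏ j ∈ range m, -(q*a*q^j) = ∏ j ∈ range m, ((-q^j) * (q*a)) :=
          Finset.prod_congr rfl fun j _ => by ring
      _ = (∏ j ∈ range m, -q^j) * ∏ _j ∈ range m, (q*a) := Finset.prod_mul_distrib
      _ = ss q m * (q*a)^m := by rw [ss, Finset.prod_const, Finset.card_range]
  rw [P1, P2, P3, qPoch_add q (q*a) m r, show (q*a)*q^m = q^(m+1)*a by ring]
  have h4 : qPoch q q m ≠ 0 := qq_ne hq0 hq1 m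
  have h6 : ((q*a):ℝ)^m ≠ 0 := pow_ne_zero _ (mul_ne_zero hq ha)
  field_simp
  ring_nf
  simp [hqbm]


lemma keyIdentity {q a b c : ℝ} (hq0 : 0 < q) (hq1 : q < 1) (ha : a ≠ 0) (n : ℕ)
    (hqa : qPoch q (q*a) n ≠ 0) (hqb : qPoch q (q*b) n ≠ 0) (hqc : qPoch q (q*c) n ≠ 0)
    (x : ℝ) :
    bigQJacobi q a b c n x
      = ((∏ j ∈ range n, (q^(n+1)*a*b - (q*a)*q^j)) / qPoch q (q*a) n) *
        ∑ m ∈ range (n+1),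
          qPoch q ((q:ℝ)^(-(n:ℤ))) m * qPoch q (q^(n+1)*a*b) m * q^m /
            (qPoch q (q*b) m * qPoch q (q*c) m * qPoch q q m) *
          ∏ j ∈ range m, ((x - q^(j+1)*c)/(q*a)) := by
  calc bigQJacobi q a b c n x
      = ∑ k ∈ range (n+1), ∑ m ∈ range (k+1),
          (qPoch q ((q:ℝ)^(-(n:ℤ))) k * qPoch q (q^(n+1)*a*b) k * q^k /
            (qPoch q (q*a) k * qPoch q (q*c) k * qPoch q q k) * dd q c k m) * ee q c x m := by
        rw [bigQJacobi]
        refine Finset.sum_congr rfl fun k _ => ?_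
        rw [expandE hq0 hq1 c k x]
        rw [Finset.mul_sum, Finset.sum_mul, Finset.sum_div]
        exact Finset.sum_congr rfl fun m _ => by ring
      _ = ∑ m ∈ range (n+1), ∑ k ∈ Ico m (n+1),
          (qPoch q ((q:ℝ)^(-(n:ℤ))) k * qPoch q (q^(n+1)*a*b) k * q^k /
            (qPoch q (q*a) k * qPoch q (q*c) k * qPoch q q k) * dd q c k m) * ee q c x m :=
        sum_triangle (n+1) _
      _ = ∑ m ∈ range (n+1),
          (∑ i ∈ range (n+1-m),
            qPoch q ((q:ℝ)^(-(n:ℤ))) (m+i) * qPoch q (q^(n+1)*a*b) (m+i) * q^(m+i) /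
              (qPoch q (q*a) (m+i) * qPoch q (q*c) (m+i) * qPoch q q (m+i)) * dd q c (m+i) m)
            * ee q c x m := by
        refine Finset.sum_congr rfl fun m hm => ?_
        rw [← Finset.sum_mul, Finset.sum_Ico_eq_sum_range]
      _ = ∑ m ∈ range (n+1),
          (((∏ j ∈ range n, (q^(n+1)*a*b - (q*a)*q^j)) / qPoch q (q*a) n)
            * (qPoch q ((q:ℝ)^(-(n:ℤ))) m * qPoch q (q^(n+1)*a*b) m * q^m /
                (qPoch q (q*b) m * qPoch q (q*c) m * qPoch q q m * (q*a)^m)))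
            * ee q c x m := by
        refine Finset.sum_congr rfl fun m hm => ?_
        rw [mem_range] at hm
        obtain ⟨r, hr⟩ : ∃ r, n = m + r := ⟨n - m, by omega⟩
        rw [hr, show m+r+1-m = r+1 by omega]
        rw [step2 hq0 hq1 ha m r (hr ▸ hqa) (hr ▸ hqb) (hr ▸ hqc)]
      _ = ((∏ j ∈ range n, (q^(n+1)*a*b - (q*a)*q^j)) / qPoch q (q*a) n) *
          ∑ m ∈ range (n+1),
            qPoch q ((q:ℝ)^(-(n:ℤ))) m * qPoch q (q^(n+1)*a*b) m * q^m /
              (qPoch q (q*b) m * qPoch q (q*c) m * qPoch q q m) *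
            ∏ j ∈ range m, ((x - q^(j+1)*c)/(q*a)) := by
        rw [Finset.mul_sum]
        refine Finset.sum_congr rfl fun m _ => ?_
        have hprod : ∏ j ∈ range m, ((x - q^(j+1)*c)/(q*a)) = ee q c x m / (q*a)^m := by
          rw [Finset.prod_div_distrib, Finset.prod_const, Finset.card_range, ee]
        rw [hprod]
        ring


end QR

/-- Limit from `q`-Racah polynomials to big `q`-Jacobi polynomials (Theorem 1 of the paper). -/
theorem qRacah_tendsto_bigQJacobi (n : ℕ) (q a b c : ℝ) (hq0 : 0 < q) (hq1 : q < 1)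
    (ha : a ≠ 0) (hqa : qPoch q (q * a) n ≠ 0) (hqb : qPoch q (q * b) n ≠ 0)
    (hqc : qPoch q (q * c) n ≠ 0) (x : ℝ) :
    Tendsto (fun N : ℕ => qRacahPoly q b a (c / a) N n (x / (q ^ (N + 1) * a)))
      (atTop ⊓ 𝓟 {N : ℕ | n ≤ N})
      (𝓝 (bigQJacobi q a b c n x / bigQJacobi q a b c n (q * c))) := by
  have hq : q ≠ 0 := hq0.ne'
  refine Tendsto.mono_left ?_ inf_le_left
  -- The closed form of `P_n(qc)`
  set W : ℝ := ∏ j ∈ Finset.range n, (q^(n+1)*a*b - (q*a)*q^j) with hW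
  have hPqc : bigQJacobi q a b c n (q*c) = W / qPoch q (q*a) n := by
    rw [bigQJacobi, ← QR.vander hq0 hq1 n (q^(n+1)*a*b) (q*a) hqa]
    refine Finset.sum_congr rfl fun k hk => ?_
    rw [Finset.mem_range] at hk
    have hck : qPoch q (q*c) k ≠ 0 := QR.qPoch_ne_of_le hqc (by omega)
    have hak : qPoch q (q*a) k ≠ 0 := QR.qPoch_ne_of_le hqa (by omega)
    have hqk : qPoch q q k ≠ 0 := QR.qq_ne hq0 hq1 k
    field_simp
  have hWne : W ≠ 0 := by
    have e : W = ∏ j ∈ Finset.range n, (a*b*q^(n+1) - q*a*q^j) :=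
      Finset.prod_congr rfl fun j _ => by ring
    rw [e, QR.prodPB q a b n n (by omega), Nat.add_sub_cancel_left, show b*q^1 = q*b by ring]
    refine mul_ne_zero (Finset.prod_ne_zero_iff.2 fun j _ => ?_) hqb
    exact neg_ne_zero.2 (by positivity)
  have hPne : bigQJacobi q a b c n (q*c) ≠ 0 := by
    rw [hPqc]
    exact div_ne_zero hWne hqa
  have hval : bigQJacobi q a b c n x / bigQJacobi q a b c n (q*c)
      = ∑ m ∈ Finset.range (n+1),
          qPoch q ((q:ℝ)^(-(n:ℤ))) m * qPoch q (q^(n+1)*a*b) m * q^m /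
            (qPoch q (q*b) m * qPoch q (q*c) m * qPoch q q m) *
          ∏ j ∈ Finset.range m, ((x - q^(j+1)*c)/(q*a)) := by
    rw [QR.keyIdentity hq0 hq1 ha n hqa hqb hqc x, hPqc, ← hW,
      mul_div_cancel_left₀ _ (div_ne_zero hWne hqa)]
  rw [hval]
  -- now the limit computation
  simp only [qRacahPoly]
  have hca : q * a * (c/a) = q * c := by field_simp
  have hba : q^(n+1) * b * a = q^(n+1) * a * b := by ring
  simp only [hca, hba]
  apply tendsto_finset_sum
  intro k _
  apply Tendsto.const_mul
  apply tendsto_finset_prod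
  intro j _
  -- per-factor limit
  have hpj : (q:ℝ)^j ≠ 0 := pow_ne_zero _ hq
  have hlim : Tendsto (fun N : ℕ => (q:ℝ)^N) atTop (𝓝 0) :=
    tendsto_pow_atTop_nhds_zero_of_lt_one hq0.le hq1
  have h1 : Tendsto (fun N : ℕ =>
      ((q:ℝ)^N/q^j - x/(q*a) + q^j*(c/a))/((q:ℝ)^N/q^j - 1)) atTop
      (𝓝 (((0:ℝ)/q^j - x/(q*a) + q^j*(c/a))/((0:ℝ)/q^j - 1))) := by
    apply Tendsto.div
    · exact ((hlim.div_const _).sub_const _).add_const _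
    · exact (hlim.div_const _).sub_const 1
    · norm_num
  have h2 : ((0:ℝ)/q^j - x/(q*a) + q^j*(c/a))/((0:ℝ)/q^j - 1) = (x - q^(j+1)*c)/(q*a) := by
    field_simp
    ring
  rw [h2] at h1
  refine h1.congr fun N => ?_
  -- pointwise equality of the two expressions
  have e2 : (q:ℝ)^(2*(j:ℤ)-(N:ℤ)) = q^(2*j)/q^N := by
    rw [show 2*(j:ℤ) - (N:ℤ) = ((2*j:ℕ):ℤ) - ((N:ℕ):ℤ) by push_cast; ring,
      zpow_sub₀ hq, zpow_natCast, zpow_natCast]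
  have e3 : (q:ℝ)^((j:ℤ)-(N:ℤ)) = q^j/q^N := by
    rw [zpow_sub₀ hq, zpow_natCast, zpow_natCast]
  rw [e2, e3]
  have hpN : (q:ℝ)^N ≠ 0 := pow_ne_zero _ hq
  calc ((q:ℝ)^N/q^j - x/(q*a) + q^j*(c/a))/((q:ℝ)^N/q^j - 1)
      = (q^j * ((q:ℝ)^N/q^j - x/(q*a) + q^j*(c/a)))/(q^j * ((q:ℝ)^N/q^j - 1)) :=
        (mul_div_mul_left _ _ hpj).symm
    _ = ((q:ℝ)^N * (1 - q^j*(x/(q^(N+1)*a)) + q^(2*j)/q^N*(c/a)))/((q:ℝ)^N * (1 - q^j/q^N)) := by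
        congr 1
        · field_simp
          ring
        · field_simp
    _ = (1 - q^j*(x/(q^(N+1)*a)) + q^(2*j)/q^N*(c/a))/(1 - q^j/q^N) :=
        mul_div_mul_left _ _ hpN
end

section
/- Fix a nonnegative integer n and real numbers 0<q<1, a, b, c with a≠0, (qa;q)_n ≠ 0, (qb;q)_n ≠ 0 and (qc;q)_n ≠ 0. Then for every real x one has the second representation of the big q-Jacobi polynomial: P_n(x;a,b,c;q) = P_n(qc;a,b,c;q) · Σ_{k=0}^n (q^{−n};q)_k (q^{n+1}ab;q)_k / ((qb;q)_k (qc;q)_k (q;q)_k) · a^{−k} ∏_{j=0}^{k−1}(x − q^{j+1}c). -/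
open Filter Topology Asymptotics

namespace BQJ

noncomputable def gb (q : ℝ) : ℕ → ℕ → ℝ
  | _, 0 => 1
  | 0, _+1 => 0
  | n+1, k+1 => gb q n k + q ^ (k+1) * gb q n (k+1)

variable {q : ℝ}

@[simp] lemma gb_zero_right (n : ℕ) : gb q n 0 = 1 := by cases n <;> rfl

lemma gb_succ (n k : ℕ) : gb q (n+1) (k+1) = gb q n k + q ^ (k+1) * gb q n (k+1) := rfl

lemma gb_of_lt : ∀ {n k : ℕ}, n < k → gb q n k = 0 := by
  intro n
  induction n with
  | zero => intro k hk; match k, hk with | k+1, _ => rfl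
  | succ n ih =>
    intro k hk
    match k, hk with
    | k+1, hk =>
      rw [gb_succ, ih (by omega), ih (by omega)]
      ring

@[simp] lemma gb_self : ∀ n : ℕ, gb q n n = 1 := by
  intro n
  induction n with
  | zero => rfl
  | succ n ih => rw [gb_succ, ih, gb_of_lt (by omega)]; ring

lemma qPoch_zero (z : ℝ) : qPoch q z 0 = 1 := by simp [qPoch]

lemma qPoch_succ (z : ℝ) (k : ℕ) : qPoch q z (k+1) = qPoch q z k * (1 - z * q ^ k) :=
  Finset.prod_range_succ _ _

lemma qPoch_succ' (z : ℝ) (k : ℕ) : qPoch q z (k+1) = (1 - z) * qPoch q (z * q) k := by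
  rw [qPoch, Finset.prod_range_succ', pow_zero, mul_one, mul_comm, qPoch]
  congr 1
  exact Finset.prod_congr rfl fun j _ => by ring

lemma qPoch_add (z : ℝ) (m i : ℕ) :
    qPoch q z (m + i) = qPoch q z m * ∏ j ∈ Finset.range i, (1 - z * q ^ (m + j)) := by
  rw [qPoch, Finset.prod_range_add]
  rfl

lemma qPoch_ne_zero_of_le {z : ℝ} {m n : ℕ} (h : m ≤ n) (hn : qPoch q z n ≠ 0) :
    qPoch q z m ≠ 0 := by
  obtain ⟨i, rfl⟩ := Nat.exists_eq_add_of_le h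
  rw [qPoch_add] at hn
  exact left_ne_zero_of_mul hn

lemma one_sub_q_pow_pos (hq0 : 0 < q) (hq1 : q < 1) (j : ℕ) : 0 < 1 - q * q ^ j := by
  have h1 : q ^ j ≤ 1 := pow_le_one₀ hq0.le hq1.le
  nlinarith

lemma qPoch_q_pos (hq0 : 0 < q) (hq1 : q < 1) (k : ℕ) : 0 < qPoch q q k :=
  Finset.prod_pos fun j _ => one_sub_q_pow_pos hq0 hq1 j

lemma gb_mul :
    ∀ n k, k ≤ n → gb q n k * qPoch q q k * qPoch q q (n - k) = qPoch q q n := by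
  intro n
  induction n with
  | zero =>
    intro k hk
    interval_cases k
    simp [qPoch_zero]
  | succ n ih =>
    intro k hk
    cases k with
    | zero => simp [qPoch_zero]
    | succ k =>
      rw [gb_succ]
      rcases Nat.lt_or_ge n (k+1) with h2 | h2
      · have hk' : k = n := by omega
        subst hk'
        rw [gb_of_lt (show k < k + 1 by omega), gb_self]
        simp only [Nat.sub_self, mul_zero, zero_mul, zero_add, qPoch_zero, mul_one,
          one_mul, qPoch_succ]
        ring
      · have h1 := ih k (by omega)
        have h2' := ih (k+1) h2
        have e2 : n - k = (n - (k+1)) + 1 := by omega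
        have e1 : n + 1 - (k + 1) = (n - (k+1)) + 1 := by omega
        rw [e1]
        rw [e2] at h1
        set M := n - (k+1) with hM
        have hpow : q * q ^ k * q ^ M = q ^ n := by
          rw [← pow_succ', ← pow_add]
          congr 1
          omega
        simp only [qPoch_succ] at h1 h2' ⊢
        linear_combination (1 - q*q^k) * h1 + (q*q^k*(1 - q*q^M)) * h2'
          - q * qPoch q q n * hpow

lemma gb_succ' (hq0 : 0 < q) (hq1 : q < 1) (n k : ℕ) :
    gb q (n+1) (k+1) = q ^ (n-k) * gb q n k + gb q n (k+1) := by
  rcases Nat.lt_or_ge n k with h | h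
  · rw [gb_of_lt (show n + 1 < k + 1 by omega), gb_of_lt h, gb_of_lt (by omega)]
    ring
  rcases Nat.eq_or_lt_of_le h with h2 | h2
  · subst h2
    rw [gb_self, gb_self, gb_of_lt (by omega), Nat.sub_self]
    ring
  · -- k < n
    have hPk1 : qPoch q q (k+1) ≠ 0 := (qPoch_q_pos hq0 hq1 _).ne'
    have hPnk : qPoch q q (n-k) ≠ 0 := (qPoch_q_pos hq0 hq1 _).ne'
    refine mul_right_cancel₀ (b := qPoch q q (k+1) * qPoch q q (n-k))
      (mul_ne_zero hPk1 hPnk) ?_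
    have h3 := gb_mul (q := q) (n+1) (k+1) (by omega)
    have h1 := gb_mul (q := q) n k (by omega)
    have h2' := gb_mul (q := q) n (k+1) (by omega)
    have e1 : n + 1 - (k + 1) = n - k := by omega
    rw [e1] at h3
    set M := n - (k+1) with hM
    have e2 : n - k = M + 1 := by omega
    have e3 : n - (k+1) = M := rfl
    rw [e2] at h3 h1 ⊢
    have hpow1 : q ^ (n-k) = q * q ^ M := by rw [e2, pow_succ']
    have hpow2 : q ^ (n-k) * (q * q ^ k) = q * q ^ n := by
      rw [e2, ← pow_succ', ← pow_succ', ← pow_add]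
      congr 1
      omega
    simp only [qPoch_succ] at h1 h2' h3 ⊢
    linear_combination h3 - (q^(n-k)*(1 - q*q^k)) * h1 - (1 - q*q^M) * h2'
      + qPoch q q n * hpow2 - qPoch q q n * hpow1
      + (gb q n k * qPoch q q k * (1 - q*q^k) * qPoch q q M * (1 - q*q^M)) * hpow1

/-- Connection coefficients: `d(k,m)`. -/
noncomputable def dco (q c : ℝ) (k m : ℕ) : ℝ :=
  (-1)^m * q^(m.choose 2) * gb q k m * ∏ j ∈ Finset.Ico m k, (1 - c*q^(j+1))

lemma dco_zero (c : ℝ) (k : ℕ) :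
    dco q c (k+1) 0 = (1 - c*q^(k+1)) * dco q c k 0 := by
  unfold dco
  rw [Finset.prod_Ico_succ_top (by omega)]
  simp only [gb_zero_right]
  ring

lemma dco_rec (hq0 : 0 < q) (hq1 : q < 1) (c : ℝ) (k m : ℕ) :
    dco q c (k+1) (m+1) = (1 - c*q^(k+m+2)) * dco q c k (m+1) - q^k * dco q c k m := by
  rcases Nat.lt_or_ge k m with h | h
  · -- degenerate: all gb vanish
    unfold dco
    rw [gb_of_lt (show k+1 < m+1 by omega), gb_of_lt (show k < m+1 by omega),
      gb_of_lt h]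
    ring
  rcases Nat.eq_or_lt_of_le h with h2 | h2
  · -- m = k
    subst h2
    unfold dco
    rw [gb_self, gb_self, gb_of_lt (by omega)]
    have e : Finset.Ico (m+1) (m+1) = ∅ := by simp
    simp only [e, Finset.prod_empty, Finset.Ico_self]
    have hch : (m+1).choose 2 = m.choose 2 + m := by
      rw [Nat.choose_succ_succ, Nat.choose_one_right, Nat.add_comm]
    rw [hch, pow_add]
    ring
  · -- m+1 ≤ k
    unfold dco
    rw [Finset.prod_Ico_succ_top (show m+1 ≤ k by omega)]
    have e1 : ∏ j ∈ Finset.Ico m k, (1 - c*q^(j+1))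
        = (1 - c*q^(m+1)) * ∏ j ∈ Finset.Ico (m+1) k, (1 - c*q^(j+1)) :=
      Finset.prod_eq_prod_Ico_succ_bot h2 _
    rw [e1]
    have hch : (m+1).choose 2 = m.choose 2 + m := by
      rw [Nat.choose_succ_succ, Nat.choose_one_right, Nat.add_comm]
    have hP1 : gb q (k+1) (m+1) = gb q k m + q^(m+1) * gb q k (m+1) := gb_succ k m
    have hP2 : gb q (k+1) (m+1) = q^(k-m) * gb q k m + gb q k (m+1) := gb_succ' hq0 hq1 k m
    have hpow : q^(k-m) * q^m = q^k := by
      rw [← pow_add]; congr 1; omega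
    have hpow2 : q^(k+m+2) = q^(k+1) * q^(m+1) := by rw [← pow_add]; congr 1; omega
    rw [hch, hpow2, pow_add]
    set s1 := (-1:ℝ)^m * q^(m.choose 2) * (∏ j ∈ Finset.Ico (m+1) k, (1 - c*q^(j+1))) with hs1
    linear_combination (-s1*q^m) * hP2 + (s1*c*q^(k+1)*q^m) * hP1 + (-s1*gb q k m) * hpow

lemma dco_top (c : ℝ) (k : ℕ) : dco q c k (k+1) = 0 := by
  unfold dco
  rw [gb_of_lt (by omega)]
  ring

/-- Expansion of `(x;q)_k` in the Newton basis `∏_{j<m} (x - q^{j+1} c)`. -/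
lemma expand (hq0 : 0 < q) (hq1 : q < 1) (c x : ℝ) (k : ℕ) :
    qPoch q x k = ∑ m ∈ Finset.range (k+1),
      dco q c k m * ∏ j ∈ Finset.range m, (x - q^(j+1)*c) := by
  induction k with
  | zero => simp [qPoch_zero, dco]
  | succ k ih =>
    set e : ℕ → ℝ := fun m => ∏ j ∈ Finset.range m, (x - q^(j+1)*c) with he0
    have he : ∀ m, e (m+1) = e m * (x - q^(m+1)*c) := fun m => Finset.prod_range_succ _ _
    have key1 : ∑ m ∈ Finset.range (k+2), dco q c (k+1) m * e m
        = (∑ m ∈ Finset.range (k+1), (1-c*q^(k+m+1)) * dco q c k m * e m)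
          - q^k * ∑ m ∈ Finset.range (k+1), dco q c k m * e (m+1) := by
      rw [Finset.sum_range_succ' (fun m => dco q c (k+1) m * e m) (k+1)]
      have step : ∀ m ∈ Finset.range (k+1), dco q c (k+1) (m+1) * e (m+1)
          = (1-c*q^(k+m+2)) * dco q c k (m+1) * e (m+1)
            - q^k * (dco q c k m * e (m+1)) := by
        intro m _
        rw [dco_rec hq0 hq1]
        ring
      rw [Finset.sum_congr rfl step, Finset.sum_sub_distrib, dco_zero, ← Finset.mul_sum]
      have e5 := Finset.sum_range_succ'
        (fun m => (1-c*q^(k+m+1)) * dco q c k m * e m) (k+1)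
      have e6 := Finset.sum_range_succ
        (fun m => (1-c*q^(k+m+1)) * dco q c k m * e m) (k+1)
      rw [e6] at e5
      simp only [dco_top, mul_zero, zero_mul, add_zero] at e5
      have e7 : ∀ m ∈ Finset.range (k+1),
          (1-c*q^(k+(m+1)+1)) * dco q c k (m+1) * e (m+1)
          = (1-c*q^(k+m+2)) * dco q c k (m+1) * e (m+1) := by
        intro m _
        rw [show k+(m+1)+1 = k+m+2 from by omega]
      rw [Finset.sum_congr rfl e7] at e5
      linear_combination -e5
    have key2 : (∑ m ∈ Finset.range (k+1), dco q c k m * e m) * (1 - x*q^k)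
        = (∑ m ∈ Finset.range (k+1), (1-c*q^(k+m+1)) * dco q c k m * e m)
          - q^k * ∑ m ∈ Finset.range (k+1), dco q c k m * e (m+1) := by
      have hpt : ∀ m, dco q c k m * e m * (1 - x*q^k)
          = (1-c*q^(k+m+1)) * dco q c k m * e m - q^k * (dco q c k m * e (m+1)) := by
        intro m
        rw [he m, show q^(k+m+1) = q^k*q^(m+1) from by rw [← pow_add, Nat.add_assoc]]
        ring
      rw [Finset.sum_mul, Finset.mul_sum, ← Finset.sum_sub_distrib]
      exact Finset.sum_congr rfl fun m _ => hpt m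
    rw [qPoch_succ, ih, key1, ← key2]

/-- Terminating `q`-Chu-Vandermonde sum, division-free form. -/
lemma cv (hq0 : 0 < q) (hq1 : q < 1) :
    ∀ (N : ℕ) (β γ : ℝ), ∑ i ∈ Finset.range (N+1),
      (-1:ℝ)^i * q^((N-i).choose 2) * gb q N i * qPoch q β i *
        ∏ j ∈ Finset.Ico i N, (1 - γ*q^j)
      = q^(N.choose 2) * ∏ j ∈ Finset.range N, (β - γ*q^j) := by
  intro N
  induction N with
  | zero => intro β γ; simp [qPoch_zero]
  | succ N ih =>
    intro β γ
    have hgbtop : gb q N (N+1) = 0 := gb_of_lt (by omega)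
    set f : ℕ → ℝ := fun i => (-1:ℝ)^i * q^((N+1-i).choose 2) * q^i * gb q N i *
      qPoch q β i * ∏ j ∈ Finset.Ico i (N+1), (1 - γ*q^j) with hf
    have hIco : ∀ i : ℕ, ∏ j ∈ Finset.Ico (i+1) (N+1), (1 - γ*q^j)
        = ∏ j ∈ Finset.Ico i N, (1 - (γ*q)*q^j) := by
      intro i
      rw [Finset.prod_Ico_eq_prod_range, Finset.prod_Ico_eq_prod_range,
        show N+1 - (i+1) = N - i from by omega]
      refine Finset.prod_congr rfl fun j _ => ?_
      rw [show i+1+j = (i+j)+1 from by omega, pow_succ]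
      ring
    have step : ∀ i ∈ Finset.range (N+1),
        (-1:ℝ)^(i+1) * q^((N+1-(i+1)).choose 2) * gb q (N+1) (i+1) * qPoch q β (i+1) *
          ∏ j ∈ Finset.Ico (i+1) (N+1), (1 - γ*q^j)
        = (-(1-β)) * ((-1:ℝ)^i * q^((N-i).choose 2) * gb q N i * qPoch q (β*q) i *
            ∏ j ∈ Finset.Ico i N, (1 - (γ*q)*q^j)) + f (i+1) := by
      intro i _
      simp only [hf]
      rw [show N+1-(i+1) = N-i from by omega, gb_succ]
      simp only [qPoch_succ', hIco i]
      ring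
    have ht0 : (-1:ℝ)^0 * q^((N+1-0).choose 2) * gb q (N+1) 0 * qPoch q β 0 *
        ∏ j ∈ Finset.Ico 0 (N+1), (1 - γ*q^j) = f 0 := by
      rw [hf]
      simp [qPoch_zero]
    have e8 := Finset.sum_range_succ' f (N+1)
    have e9 := Finset.sum_range_succ f (N+1)
    have hfN1 : f (N+1) = 0 := by rw [hf]; simp [hgbtop]
    have e10 : ∑ i ∈ Finset.range (N+1), f i
        = q^N * (1-γ*q^N) * (q^(N.choose 2) * ∏ j ∈ Finset.range N, (β-γ*q^j)) := by
      have hterm : ∀ i ∈ Finset.range (N+1), f i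
          = (q^N*(1-γ*q^N)) * ((-1:ℝ)^i * q^((N-i).choose 2) * gb q N i * qPoch q β i *
              ∏ j ∈ Finset.Ico i N, (1-γ*q^j)) := by
        intro i hi
        have hiN : i ≤ N := by simpa using Nat.lt_succ_iff.mp (Finset.mem_range.mp hi)
        rw [hf]
        simp only
        rw [Finset.prod_Ico_succ_top (by omega),
          show (N+1-i).choose 2 = (N-i).choose 2 + (N-i) from by
            rw [show N+1-i = (N-i)+1 from by omega, Nat.choose_succ_succ,
              Nat.choose_one_right, Nat.add_comm],
          pow_add]
        have hqq : q^(N-i) * q^i = q^N := by rw [← pow_add]; congr 1; omega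
        linear_combination ((-1:ℝ)^i * q^((N-i).choose 2) * gb q N i * qPoch q β i *
          (∏ j ∈ Finset.Ico i N, (1-γ*q^j)) * (1-γ*q^N)) * hqq
      rw [Finset.sum_congr rfl hterm, ← Finset.mul_sum, ih β γ]
    rw [Finset.sum_range_succ' (fun i => (-1:ℝ)^i * q^((N+1-i).choose 2) * gb q (N+1) i *
      qPoch q β i * ∏ j ∈ Finset.Ico i (N+1), (1 - γ*q^j)) (N+1)]
    rw [Finset.sum_congr rfl step, Finset.sum_add_distrib, ← Finset.mul_sum,
      ih (β*q) (γ*q), ht0]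
    have hprodq : ∏ j ∈ Finset.range N, (β*q - (γ*q)*q^j)
        = q^N * ∏ j ∈ Finset.range N, (β - γ*q^j) := by
      rw [Finset.prod_congr rfl (fun j _ => show β*q - (γ*q)*q^j = q*(β-γ*q^j) from by ring),
        Finset.prod_mul_distrib, Finset.prod_const, Finset.card_range]
    have hch2 : (N+1).choose 2 = N.choose 2 + N := by
      rw [Nat.choose_succ_succ, Nat.choose_one_right, Nat.add_comm]
    have hps := Finset.prod_range_succ (fun j => β - γ*q^j) N
    rw [hprodq, hch2, pow_add, hps]
    linear_combination -e8 + e9 + e10 + hfN1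

lemma choose_two_succ (i : ℕ) : (i+1).choose 2 = i.choose 2 + i := by
  rw [Nat.choose_succ_succ, Nat.choose_one_right, Nat.add_comm]

lemma two_mul_choose_two : ∀ i : ℕ, 2 * i.choose 2 + i = i * i := by
  intro i
  induction i with
  | zero => rfl
  | succ i ih =>
    rw [choose_two_succ, show (i+1)*(i+1) = i*i + 2*i + 1 from by ring]
    omega

lemma choose_two_add : ∀ (t i : ℕ), (i+t).choose 2 = i.choose 2 + t.choose 2 + i*t := by
  intro t
  induction t with
  | zero => intro i; simp
  | succ t ih =>
    intro i
    have h1 : i + (t+1) = (i+t) + 1 := by omega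
    rw [h1, choose_two_succ, ih i, choose_two_succ t, show i*(t+1) = i*t + i from by ring]
    omega

lemma choose_two_sub {i N : ℕ} (h : i ≤ N) :
    i.choose 2 + i + N.choose 2 = (N-i).choose 2 + N*i := by
  have h1 := choose_two_add (N-i) i
  rw [show i + (N-i) = N from by omega] at h1
  have h2 := two_mul_choose_two i
  have h3 : N*i = i*i + (N-i)*i := by
    rw [← Nat.add_mul]
    congr 1
    omega
  have h4 : i * (N-i) + (N-i)*i = 2 * ((N-i)*i) := by ring
  omega

/-- `(q^{-N};q)_i` conversion. -/
lemma zl (hq0 : 0 < q) (hq1 : q < 1) (N : ℕ) :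
    ∀ i ≤ N, (∏ j ∈ Finset.range i, (1 - q^((j:ℤ) - (N:ℤ)))) * qPoch q q (N-i) * q^(N*i)
      = (-1:ℝ)^i * q^(i.choose 2) * qPoch q q N := by
  intro i
  induction i with
  | zero => intro _; simp
  | succ i ih =>
    intro hi
    have h1 := ih (by omega)
    rw [Finset.prod_range_succ]
    rw [show N - i = (N-(i+1)) + 1 from by omega, qPoch_succ] at h1
    have hz : (1 - q^((i:ℤ) - (N:ℤ))) * q^N = -(q^i) * (1 - q*q^(N-(i+1))) := by
      have hz1 : q^((i:ℤ)-(N:ℤ)) * q^(N:ℕ) = q^i := by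
        rw [← zpow_natCast q N, ← zpow_add₀ (ne_of_gt hq0), ← zpow_natCast q i]
        congr 1
        ring
      have hz2 : q^i * (q * q^(N-(i+1))) = q^N := by
        rw [← pow_succ' q (N-(i+1)), ← pow_add]
        congr 1
        omega
      linear_combination -hz1 - hz2
    have hq2 : q^(N*(i+1)) = q^(N*i) * q^N := by rw [← pow_add, Nat.mul_succ]
    rw [hq2, choose_two_succ, pow_add]
    linear_combination ((∏ j ∈ Finset.range i, (1 - q^((j:ℤ) - (N:ℤ)))) *
        qPoch q q (N-(i+1)) * q^(N*i)) * hz - (q^i) * h1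

/-- `bigQJacobi` expanded in the Newton basis. -/
lemma rep (hq0 : 0 < q) (hq1 : q < 1) (n : ℕ) (a b c : ℝ) (y : ℝ) :
    bigQJacobi q a b c n y = ∑ m ∈ Finset.range (n+1),
      (∑ k ∈ Finset.range (n+1),
        (qPoch q ((q:ℝ)^(-(n:ℤ))) k * qPoch q (q^(n+1)*a*b) k * q^k /
          (qPoch q (q*a) k * qPoch q (q*c) k * qPoch q q k)) * dco q c k m)
        * ∏ j ∈ Finset.range m, (y - q^(j+1)*c) := by
  unfold bigQJacobi
  have h1 : ∀ k ∈ Finset.range (n+1),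
      qPoch q ((q:ℝ)^(-(n:ℤ))) k * qPoch q (q^(n+1)*a*b) k * qPoch q y k * q^k /
        (qPoch q (q*a) k * qPoch q (q*c) k * qPoch q q k)
      = ∑ m ∈ Finset.range (n+1),
        ((qPoch q ((q:ℝ)^(-(n:ℤ))) k * qPoch q (q^(n+1)*a*b) k * q^k /
          (qPoch q (q*a) k * qPoch q (q*c) k * qPoch q q k)) * dco q c k m)
          * ∏ j ∈ Finset.range m, (y - q^(j+1)*c) := by
    intro k hk
    have hk' : k + 1 ≤ n + 1 := by
      have := Finset.mem_range.mp hk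
      omega
    have e0 : qPoch q ((q:ℝ)^(-(n:ℤ))) k * qPoch q (q^(n+1)*a*b) k * qPoch q y k * q^k /
        (qPoch q (q*a) k * qPoch q (q*c) k * qPoch q q k)
        = (qPoch q ((q:ℝ)^(-(n:ℤ))) k * qPoch q (q^(n+1)*a*b) k * q^k /
          (qPoch q (q*a) k * qPoch q (q*c) k * qPoch q q k)) * qPoch q y k := by
      ring
    rw [e0, expand hq0 hq1 c y k, Finset.mul_sum]
    rw [Finset.sum_subset (Finset.range_subset_range.mpr hk')
      (fun m _ hm => by
        rw [dco, gb_of_lt (by simpa using hm), mul_zero, zero_mul, zero_mul, mul_zero])]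
    exact Finset.sum_congr rfl fun m _ => by ring
  rw [Finset.sum_congr rfl h1, Finset.sum_comm]
  exact Finset.sum_congr rfl fun m _ => (Finset.sum_mul _ _ _).symm

lemma qPoch_split (z : ℝ) {i N : ℕ} (h : i ≤ N) :
    qPoch q z N = qPoch q z i * ∏ j ∈ Finset.Ico i N, (1 - z*q^j) := by
  simp only [qPoch, Finset.range_eq_Ico]
  rw [← Finset.prod_Ico_consecutive _ (Nat.zero_le i) h]

lemma coeff (hq0 : 0 < q) (hq1 : q < 1) (n : ℕ) (a b c : ℝ)
    (hqa : qPoch q (q*a) n ≠ 0) (hqc : qPoch q (q*c) n ≠ 0)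
    (m : ℕ) (hm : m ≤ n) :
    ∑ k ∈ Finset.range (n+1),
      (qPoch q ((q:ℝ)^(-(n:ℤ))) k * qPoch q (q^(n+1)*a*b) k * q^k /
        (qPoch q (q*a) k * qPoch q (q*c) k * qPoch q q k)) * dco q c k m
    = (-1:ℝ)^m * q^(m.choose 2 + m) * qPoch q ((q:ℝ)^(-(n:ℤ))) m
        * qPoch q (q^(n+1)*a*b) m
        * (∏ j ∈ Finset.range (n-m), (q^(n+1)*a*b*q^m - a*q^(m+1)*q^j))
        / (qPoch q (q*a) m * qPoch q (q*c) m * qPoch q q m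
            * qPoch q (a*q^(m+1)) (n-m)) := by
  have hq' : q ≠ 0 := ne_of_gt hq0
  set N := n - m with hN
  set B : ℝ := q^(n+1)*a*b with hB
  set β : ℝ := B*q^m with hβ
  set γ : ℝ := a*q^(m+1) with hγ
  set Φ : ℝ := (-1:ℝ)^m * q^(m.choose 2 + m) * qPoch q ((q:ℝ)^(-(n:ℤ))) m
      * qPoch q B m / (qPoch q (q*a) m * qPoch q (q*c) m * qPoch q q m
        * (q^(N.choose 2) * qPoch q γ N)) with hΦ
  -- Step A : restrict to k ≥ m and reindex
  have hsub : Finset.Ico m (n+1) ⊆ Finset.range (n+1) := by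
    rw [Finset.range_eq_Ico]
    exact Finset.Ico_subset_Ico (by omega) le_rfl
  rw [← Finset.sum_subset hsub (fun k hk' hk => by
      have hk'' := Finset.mem_range.mp hk'
      have hkm : k < m := by
        simp only [Finset.mem_Ico, not_and_or, not_le] at hk
        omega
      simp [dco, gb_of_lt hkm])]
  rw [Finset.sum_Ico_eq_sum_range, show n+1-m = N+1 from by omega]
  have key : ∀ i ∈ Finset.range (N+1),
      (qPoch q ((q:ℝ)^(-(n:ℤ))) (m+i) * qPoch q B (m+i) * q^(m+i) /
        (qPoch q (q*a) (m+i) * qPoch q (q*c) (m+i) * qPoch q q (m+i))) * dco q c (m+i) m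
      = Φ * ((-1:ℝ)^i * q^((N-i).choose 2) * gb q N i * qPoch q β i *
          ∏ j ∈ Finset.Ico i N, (1 - γ*q^j)) := by
    intro i hi
    have hiN : i ≤ N := by
      have := Finset.mem_range.mp hi
      omega
    have hmi : m + i ≤ n := by omega
    have hPqi : qPoch q q i ≠ 0 := (qPoch_q_pos hq0 hq1 i).ne'
    have hPqm : qPoch q q m ≠ 0 := (qPoch_q_pos hq0 hq1 m).ne'
    have hPqNi : qPoch q q (N-i) ≠ 0 := (qPoch_q_pos hq0 hq1 (N-i)).ne'
    have hPqN : qPoch q q N ≠ 0 := (qPoch_q_pos hq0 hq1 N).ne'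
    have hPami : qPoch q (q*a) (m+i) ≠ 0 := qPoch_ne_zero_of_le hmi hqa
    have hPcmi : qPoch q (q*c) (m+i) ≠ 0 := qPoch_ne_zero_of_le hmi hqc
    have hPam : qPoch q (q*a) m ≠ 0 := qPoch_ne_zero_of_le hm hqa
    have hPcm : qPoch q (q*c) m ≠ 0 := qPoch_ne_zero_of_le hm hqc
    have hPn : qPoch q ((q:ℝ)^(-(n:ℤ))) (m+i)
        = qPoch q ((q:ℝ)^(-(n:ℤ))) m * ∏ j ∈ Finset.range i, (1 - q^((j:ℤ) - (N:ℤ))) := by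
      rw [qPoch_add]
      congr 1
      refine Finset.prod_congr rfl fun j _ => ?_
      congr 1
      rw [← zpow_natCast q (m+j), ← zpow_add₀ hq']
      congr 1
      simp only [hN]
      omega
    have hPB : qPoch q B (m+i) = qPoch q B m * qPoch q β i := by
      rw [qPoch_add, qPoch]
      congr 1
      refine Finset.prod_congr rfl fun j _ => ?_
      simp only [hβ]
      ring
    have hPa : qPoch q (q*a) (m+i) = qPoch q (q*a) m * qPoch q γ i := by
      rw [qPoch_add, qPoch]
      congr 1
      refine Finset.prod_congr rfl fun j _ => ?_
      simp only [hγ]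
      ring
    have hPc : qPoch q (q*c) (m+i)
        = qPoch q (q*c) m * ∏ j ∈ Finset.Ico m (m+i), (1 - c*q^(j+1)) := by
      rw [qPoch_add]
      congr 1
      rw [Finset.prod_Ico_eq_prod_range, show m+i-m = i from by omega]
      refine Finset.prod_congr rfl fun j _ => ?_
      ring
    have hgb1 : gb q (m+i) m * qPoch q q m * qPoch q q i = qPoch q q (m+i) := by
      have h := gb_mul (q := q) (m+i) m (by omega)
      rwa [show m+i-m = i from by omega] at h
    have hgbmi : gb q (m+i) m ≠ 0 := by
      intro h0
      rw [h0, zero_mul, zero_mul] at hgb1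
      exact (qPoch_q_pos hq0 hq1 (m+i)).ne' hgb1.symm
    have hγi : qPoch q γ i ≠ 0 := by
      intro h0
      rw [hPa, h0, mul_zero] at hPami
      exact hPami rfl
    have hγN : qPoch q γ N ≠ 0 := by
      have hsplit : qPoch q (q*a) n = qPoch q (q*a) m * qPoch q γ N := by
        rw [show n = m + N from by omega, qPoch_add, qPoch]
        congr 1
        refine Finset.prod_congr rfl fun j _ => ?_
        simp only [hγ]
        ring
      intro h0
      rw [hsplit, h0, mul_zero] at hqa
      exact hqa rfl
    have hPic : (∏ j ∈ Finset.Ico m (m+i), (1 - c*q^(j+1))) ≠ 0 := by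
      intro h0
      rw [hPc, h0, mul_zero] at hPcmi
      exact hPcmi rfl
    have hZ' : (∏ j ∈ Finset.range i, (1 - q^((j:ℤ) - (N:ℤ))))
        = (-1:ℝ)^i * q^(i.choose 2) * qPoch q q N / (qPoch q q (N-i) * q^(N*i)) := by
      rw [eq_div_iff (mul_ne_zero hPqNi (pow_ne_zero _ hq'))]
      linear_combination zl hq0 hq1 N i hiN
    have hgbN' : gb q N i = qPoch q q N / (qPoch q q i * qPoch q q (N-i)) := by
      rw [eq_div_iff (mul_ne_zero hPqi hPqNi)]
      linear_combination gb_mul (q := q) N i hiN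
    have hIcoG : (∏ j ∈ Finset.Ico i N, (1 - γ*q^j)) = qPoch q γ N / qPoch q γ i := by
      rw [eq_div_iff hγi]
      linear_combination -(qPoch_split (q := q) γ hiN)
    have hexp' : q^((N-i).choose 2)
        = q^(i.choose 2) * q^i * q^(N.choose 2) / q^(N*i) := by
      rw [eq_div_iff (pow_ne_zero _ hq')]
      rw [← pow_add, ← pow_add, ← pow_add]
      congr 1
      exact (choose_two_sub hiN).symm
    simp only [dco]
    rw [hPn, hPB, hPa, hPc, ← hgb1, hZ', hgbN', hIcoG, hexp', hΦ]
    field_simp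
    ring
  rw [Finset.sum_congr rfl key, ← Finset.mul_sum, cv hq0 hq1 N β γ]
  rw [hΦ]
  have hPqN : qPoch q q N ≠ 0 := (qPoch_q_pos hq0 hq1 N).ne'
  have hPam : qPoch q (q*a) m ≠ 0 := qPoch_ne_zero_of_le hm hqa
  have hPcm : qPoch q (q*c) m ≠ 0 := qPoch_ne_zero_of_le hm hqc
  have hPqm : qPoch q q m ≠ 0 := (qPoch_q_pos hq0 hq1 m).ne'
  have hγN : qPoch q γ N ≠ 0 := by
    have hsplit : qPoch q (q*a) n = qPoch q (q*a) m * qPoch q γ N := by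
      rw [show n = m + N from by omega, qPoch_add]
      congr 1
      refine Finset.prod_congr rfl fun j _ => ?_
      simp only [hγ]
      ring
    intro h0
    rw [hsplit, h0, mul_zero] at hqa
    exact hqa rfl
  field_simp

end BQJ

open BQJ in
/-- Second `q`-hypergeometric representation of the big `q`-Jacobi polynomial. -/
theorem bigQJacobi_second_representation (n : ℕ) (q a b c : ℝ) (hq0 : 0 < q) (hq1 : q < 1)
    (ha : a ≠ 0) (hqa : qPoch q (q * a) n ≠ 0) (hqb : qPoch q (q * b) n ≠ 0)
    (hqc : qPoch q (q * c) n ≠ 0) (x : ℝ) :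
    bigQJacobi q a b c n x =
      bigQJacobi q a b c n (q * c) *
        ∑ k ∈ Finset.range (n + 1),
          qPoch q ((q : ℝ) ^ (-(n : ℤ))) k * qPoch q (q ^ (n + 1) * a * b) k /
            (qPoch q (q * b) k * qPoch q (q * c) k * qPoch q q k) *
            (a ^ (-(k : ℤ)) * ∏ j ∈ Finset.range k, (x - q ^ (j + 1) * c)) := by
  have hq' : q ≠ 0 := ne_of_gt hq0
  rw [BQJ.rep hq0 hq1 n a b c x, BQJ.rep hq0 hq1 n a b c (q*c)]
  have hqc_eval : ∑ m ∈ Finset.range (n+1),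
      (∑ k ∈ Finset.range (n+1),
        (qPoch q ((q:ℝ)^(-(n:ℤ))) k * qPoch q (q^(n+1)*a*b) k * q^k /
          (qPoch q (q*a) k * qPoch q (q*c) k * qPoch q q k)) * dco q c k m)
        * ∏ j ∈ Finset.range m, (q*c - q^(j+1)*c)
      = ∑ k ∈ Finset.range (n+1),
        (qPoch q ((q:ℝ)^(-(n:ℤ))) k * qPoch q (q^(n+1)*a*b) k * q^k /
          (qPoch q (q*a) k * qPoch q (q*c) k * qPoch q q k)) * dco q c k 0 := by
    rw [Finset.sum_eq_single 0]
    · simp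
    · intro m _ hm0
      apply mul_eq_zero_of_right
      exact Finset.prod_eq_zero (Finset.mem_range.mpr (by omega))
        (show q*c - q^(0+1)*c = 0 by ring)
    · intro h
      exact absurd (Finset.mem_range.mpr (by omega)) h
  rw [hqc_eval, Finset.mul_sum]
  refine Finset.sum_congr rfl fun m hm => ?_
  have hmn : m ≤ n := by
    have := Finset.mem_range.mp hm
    omega
  rw [BQJ.coeff hq0 hq1 n a b c hqa hqc m hmn, BQJ.coeff hq0 hq1 n a b c hqa hqc 0 (Nat.zero_le n)]
  set N := n - m with hN
  have hNn : N ≤ n := by omega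
  -- auxiliary facts
  have hPam : qPoch q (q*a) m ≠ 0 := qPoch_ne_zero_of_le hmn hqa
  have hPcm : qPoch q (q*c) m ≠ 0 := qPoch_ne_zero_of_le hmn hqc
  have hPbm : qPoch q (q*b) m ≠ 0 := qPoch_ne_zero_of_le hmn hqb
  have hPqm : qPoch q q m ≠ 0 := (qPoch_q_pos hq0 hq1 m).ne'
  have ham : (a:ℝ)^m ≠ 0 := pow_ne_zero m ha
  have hF1 : qPoch q (a*q^(0+1)) n = qPoch q (q*a) m * qPoch q (a*q^(m+1)) N := by
    have h0 : qPoch q (a*q^(0+1)) n = qPoch q (q*a) n := by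
      unfold qPoch
      exact Finset.prod_congr rfl fun j _ => by ring
    rw [h0, show n = m + N from by omega, qPoch_add, qPoch]
    congr 1
    exact Finset.prod_congr rfl fun j _ => by ring
  have hγN : qPoch q (a*q^(m+1)) N ≠ 0 := by
    intro h0
    have h1 : qPoch q (a*q^(0+1)) n = qPoch q (q*a) n := by
      unfold qPoch
      exact Finset.prod_congr rfl fun j _ => by ring
    rw [← h1, hF1, h0, mul_zero] at hqa
    exact hqa rfl
  have hγn : qPoch q (a*q^(0+1)) n ≠ 0 := by
    rw [hF1]
    exact mul_ne_zero hPam hγN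
  have hF2 : ∏ j ∈ Finset.range N, (q^(n+1)*a*b*q^m - a*q^(m+1)*q^j)
      = q^(m*N) * ∏ j ∈ Finset.range N, (q^(n+1)*a*b - a*q^(0+1)*q^j) := by
    rw [Finset.prod_congr rfl (fun j _ =>
      show q^(n+1)*a*b*q^m - a*q^(m+1)*q^j
        = q^m * (q^(n+1)*a*b - a*q^(0+1)*q^j) from by ring),
      Finset.prod_mul_distrib, Finset.prod_const, Finset.card_range, ← pow_mul]
  have hsplit3 : ∏ j ∈ Finset.range n, (q^(n+1)*a*b - a*q^(0+1)*q^j)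
      = (∏ j ∈ Finset.range N, (q^(n+1)*a*b - a*q^(0+1)*q^j))
        * ∏ j ∈ Finset.Ico N n, (q^(n+1)*a*b - a*q^(0+1)*q^j) := by
    rw [Finset.range_eq_Ico,
      ← Finset.prod_Ico_consecutive _ (Nat.zero_le N) hNn, ← Finset.range_eq_Ico]
  have hsum_id : ∑ t ∈ Finset.range m, t = m.choose 2 := by
    have h2 := Finset.sum_range_id_mul_two m
    have h3 := two_mul_choose_two m
    have h4 : m * (m-1) + m = m*m := by
      cases m with
      | zero => rfl
      | succ k => simp [Nat.succ_sub_one]; ring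
    omega
  have hq4 : ∏ t ∈ Finset.range m, q^(N+t+1) = q^(m*N + m + m.choose 2) := by
    rw [Finset.prod_pow_eq_pow_sum]
    congr 1
    rw [Finset.sum_congr rfl (fun t _ => show N+t+1 = (N+1)+t from by omega),
      Finset.sum_add_distrib, Finset.sum_const, Finset.card_range, hsum_id,
      smul_eq_mul, Nat.mul_succ]
  have hb4 : ∏ t ∈ Finset.range m, (1 - b*q^(m-t)) = qPoch q (q*b) m := by
    have hr := Finset.prod_range_reflect (fun j => 1 - b*q^(j+1)) m
    calc ∏ t ∈ Finset.range m, (1 - b*q^(m-t))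
        = ∏ t ∈ Finset.range m, (1 - b*q^((m-1-t)+1)) := by
          refine Finset.prod_congr rfl fun t ht => ?_
          have := Finset.mem_range.mp ht
          rw [show (m-1-t)+1 = m-t from by omega]
      _ = ∏ j ∈ Finset.range m, (1 - b*q^(j+1)) := hr
      _ = qPoch q (q*b) m := by
          unfold qPoch
          exact Finset.prod_congr rfl fun j _ => by ring
  have hF4 : ∏ j ∈ Finset.Ico N n, (q^(n+1)*a*b - a*q^(0+1)*q^j)
      = (-a)^m * (q^(m*N + m + m.choose 2) * qPoch q (q*b) m) := by
    rw [Finset.prod_Ico_eq_prod_range, show n - N = m from by omega]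
    have hterm : ∀ t ∈ Finset.range m,
        q^(n+1)*a*b - a*q^(0+1)*q^(N+t)
        = (-a) * (q^(N+t+1) * (1 - b*q^(m-t))) := by
      intro t ht
      have htm := Finset.mem_range.mp ht
      have he : q^(n+1) = q^(N+t+1) * q^(m-t) := by
        rw [← pow_add]
        congr 1
        omega
      rw [he]
      ring
    rw [Finset.prod_congr rfl hterm, Finset.prod_mul_distrib, Finset.prod_mul_distrib,
      Finset.prod_const, Finset.card_range, hq4, hb4]
  have hza : (a:ℝ)^(-(m:ℤ)) = (a^m)⁻¹ := by
    rw [zpow_neg, zpow_natCast]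
  have hnegpow : (-a:ℝ)^m = (-1:ℝ)^m * a^m := by rw [neg_pow]
  simp only [Nat.sub_zero, qPoch_zero, show Nat.choose 0 2 + 0 = 0 from rfl, pow_zero,
    one_mul, mul_one]
  rw [hF2, hsplit3, hF4, hnegpow, hF1, hza]
  field_simp
  have hPbm' : qPoch q (b*q) m ≠ 0 := by rw [mul_comm]; exact hPbm
  rw [mul_div_mul_right _ _ hPbm']
  ring
end

section
/- Fix a nonnegative integer n and real numbers 0<q<1, a, b with a≠0, (qa;q)_n ≠ 0 and (qb;q)_n ≠ 0. Then the big q-Jacobi polynomial with c=0 reduces to a little q-Jacobi polynomial: for every real x, P_n(x;a,b,0;q) = P_n(0;a,b,0;q) · p_n( x/(qa) ; b, a ; q ). -/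
open Filter Topology Asymptotics

lemma qPoch_zero (q z : ℝ) : qPoch q z 0 = 1 := by simp [qPoch]
lemma qPoch_succ_last (q z : ℝ) (k : ℕ) :
    qPoch q z (k + 1) = qPoch q z k * (1 - z * q ^ k) := Finset.prod_range_succ _ _
lemma qPoch_succ_first (q z : ℝ) (k : ℕ) :
    qPoch q z (k + 1) = qPoch q (z * q) k * (1 - z) := by
  rw [qPoch, Finset.prod_range_succ']
  simp only [pow_zero, mul_one, qPoch]
  congr 1
  exact Finset.prod_congr rfl fun i _ => by ring_nf
lemma qPoch_add (q z : ℝ) (j m : ℕ) :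
    qPoch q z (j + m) = qPoch q z j * qPoch q (z * q ^ j) m := by
  rw [qPoch, Finset.prod_range_add]
  congr 1
  exact Finset.prod_congr rfl fun i _ => by rw [pow_add]; ring

lemma qPoch_zero_arg (q : ℝ) (k : ℕ) : qPoch q 0 k = 1 := by simp [qPoch]

lemma qPoch_shift_ne_zero_of_le {q z : ℝ} {n : ℕ} (h : qPoch q z n ≠ 0) {k : ℕ} (hk : k ≤ n) :
    qPoch q (z * q ^ k) (n - k) ≠ 0 := by
  obtain ⟨m, rfl⟩ := Nat.exists_eq_add_of_le hk
  rw [qPoch_add] at h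
  simpa using right_ne_zero_of_mul h

lemma qPoch_ne_zero_of_le {q z : ℝ} {n : ℕ} (h : qPoch q z n ≠ 0) {k : ℕ} (hk : k ≤ n) :
    qPoch q z k ≠ 0 := by
  obtain ⟨m, rfl⟩ := Nat.exists_eq_add_of_le hk
  rw [qPoch_add] at h
  exact left_ne_zero_of_mul h
lemma qPoch_q_pos {q : ℝ} (hq0 : 0 < q) (hq1 : q < 1) (k : ℕ) : 0 < qPoch q q k := by
  apply Finset.prod_pos
  intro i _
  have h1 : q ^ (i + 1) < 1 := pow_lt_one₀ hq0.le hq1 (Nat.succ_ne_zero i)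
  have h2 : q * q ^ i = q ^ (i + 1) := by ring
  linarith [h2 ▸ h1]
lemma qPoch_q_ne_zero {q : ℝ} (hq0 : 0 < q) (hq1 : q < 1) (k : ℕ) : qPoch q q k ≠ 0 :=
  (qPoch_q_pos hq0 hq1 k).ne'

-- splitting lemma:  (a/q ; q)_{k+1} = (a;q)_{k+1} - (a/q)(1-q^{k+1})(a;q)_k
lemma qPoch_div_q (q a : ℝ) (hq : q ≠ 0) (k : ℕ) :
    qPoch q (a / q) (k + 1)
      = qPoch q a (k + 1) - (a / q) * (1 - q ^ (k + 1)) * qPoch q a k := by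
  have h1 : qPoch q (a / q) (k + 1) = qPoch q a k * (1 - a / q) := by
    rw [qPoch_succ_first]
    congr 2
    field_simp
  rw [h1, qPoch_succ_last]
  field_simp
  ring

lemma zpow_neg_succ (q : ℝ) (hq : q ≠ 0) (N : ℕ) :
    (q : ℝ) ^ (-((N + 1 : ℕ) : ℤ)) = q ^ (-(N : ℤ)) / q := by
  rw [div_eq_mul_inv, ← zpow_neg_one q, ← zpow_add₀ hq]
  congr 1
  push_cast
  ring

lemma zpow_neg_mul_pow_self (q : ℝ) (hq : q ≠ 0) (N : ℕ) :
    (q : ℝ) ^ (-(N : ℤ)) * q ^ N = 1 := by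
  rw [← zpow_natCast q N, ← zpow_add₀ hq]
  simp

lemma qPoch_qpow_neg_self (q : ℝ) (hq : q ≠ 0) (N : ℕ) :
    qPoch q ((q : ℝ) ^ (-(N : ℤ))) (N + 1) = 0 := by
  apply Finset.prod_eq_zero (Finset.self_mem_range_succ N)
  rw [zpow_neg_mul_pow_self q hq N]
  ring

theorem qVdm (q : ℝ) (hq0 : 0 < q) (hq1 : q < 1) :
    ∀ (N : ℕ) (B C : ℝ), qPoch q C N ≠ 0 →
      ∑ m ∈ Finset.range (N + 1),
          qPoch q ((q : ℝ) ^ (-(N : ℤ))) m * qPoch q B m * q ^ m /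
            (qPoch q C m * qPoch q q m)
        = (∏ i ∈ Finset.range N, (B - C * q ^ i)) / qPoch q C N := by
  have hq : q ≠ 0 := hq0.ne'
  intro N
  induction N with
  | zero => intro B C _; simp [qPoch]
  | succ N ih =>
    intro B C hC
    have hC1 : (1 : ℝ) - C ≠ 0 := by
      have := qPoch_ne_zero_of_le hC (show 1 ≤ N + 1 by omega)
      rw [qPoch_succ_last, qPoch_zero] at this
      simpa using this
    have hCq : qPoch q (C * q) N ≠ 0 := by
      have h := hC
      rw [show N + 1 = N + 1 from rfl, qPoch_succ_first] at h
      exact left_ne_zero_of_mul h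
    have hCN : qPoch q C N ≠ 0 := qPoch_ne_zero_of_le hC (by omega)
    -- term identity for m = k+1
    have hterm : ∀ k : ℕ,
        qPoch q ((q : ℝ) ^ (-((N + 1 : ℕ) : ℤ))) (k + 1) * qPoch q B (k + 1) * q ^ (k + 1) /
            (qPoch q C (k + 1) * qPoch q q (k + 1))
          = qPoch q ((q : ℝ) ^ (-(N : ℤ))) (k + 1) * qPoch q B (k + 1) * q ^ (k + 1) /
              (qPoch q C (k + 1) * qPoch q q (k + 1))
            - (q : ℝ) ^ (-(N : ℤ)) * ((1 - B) / (1 - C)) *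
              (qPoch q ((q : ℝ) ^ (-(N : ℤ))) k * qPoch q (B * q) k * q ^ k /
                (qPoch q (C * q) k * qPoch q q k)) := by
      intro k
      have hsplit := qPoch_div_q q ((q : ℝ) ^ (-(N : ℤ))) hq k
      rw [← zpow_neg_succ q hq N] at hsplit
      rw [hsplit]
      have hqk : qPoch q q (k + 1) = qPoch q q k * (1 - q ^ (k + 1)) := by
        rw [qPoch_succ_last]; ring_nf
      have hBk : qPoch q B (k + 1) = qPoch q (B * q) k * (1 - B) := qPoch_succ_first _ _ _
      have hCk : qPoch q C (k + 1) = qPoch q (C * q) k * (1 - C) := qPoch_succ_first _ _ _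
      have h1qk : (1 : ℝ) - q ^ (k + 1) ≠ 0 := by
        have := pow_lt_one₀ hq0.le hq1 (Nat.succ_ne_zero k)
        intro h; rw [sub_eq_zero] at h; rw [← h] at this; exact lt_irrefl _ this
      have hqq : qPoch q q k ≠ 0 := qPoch_q_ne_zero hq0 hq1 k
      -- expand and clear denominators
      by_cases hCqk : qPoch q (C * q) k = 0
      · rw [hCk, hCqk]; simp
      · rw [hBk, hCk, hqk]
        rw [zpow_neg_succ q hq N]
        field_simp
        ring
    have hone : ∀ (z : ℝ), qPoch q z 0 * qPoch q z 0 * q ^ 0 / (qPoch q z 0 * qPoch q q 0) = 1 := by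
      intro z; simp [qPoch]
    rw [Finset.sum_range_succ']
    rw [Finset.sum_congr rfl (fun k _ => hterm k)]
    rw [Finset.sum_sub_distrib, ← Finset.mul_sum]
    have h2 : (∑ k ∈ Finset.range (N + 1),
        qPoch q ((q : ℝ) ^ (-(N : ℤ))) (k + 1) * qPoch q B (k + 1) * q ^ (k + 1) /
          (qPoch q C (k + 1) * qPoch q q (k + 1)))
        + qPoch q ((q : ℝ) ^ (-((N + 1 : ℕ) : ℤ))) 0 * qPoch q B 0 * q ^ 0 /
            (qPoch q C 0 * qPoch q q 0)
        = ∑ m ∈ Finset.range (N + 1),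
            qPoch q ((q : ℝ) ^ (-(N : ℤ))) m * qPoch q B m * q ^ m /
              (qPoch q C m * qPoch q q m) := by
      have h0a : qPoch q ((q : ℝ) ^ (-((N + 1 : ℕ) : ℤ))) 0 * qPoch q B 0 * q ^ 0 /
          (qPoch q C 0 * qPoch q q 0) = qPoch q ((q : ℝ) ^ (-(N : ℤ))) 0 * qPoch q B 0 * q ^ 0 /
          (qPoch q C 0 * qPoch q q 0) := by simp [qPoch]
      rw [h0a]
      have hbig := Finset.sum_range_succ' (fun m =>
        qPoch q ((q : ℝ) ^ (-(N : ℤ))) m * qPoch q B m * q ^ m /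
          (qPoch q C m * qPoch q q m)) (N + 1)
      rw [← hbig, Finset.sum_range_succ]
      have hz : qPoch q ((q : ℝ) ^ (-(N : ℤ))) (N + 1) * qPoch q B (N + 1) * q ^ (N + 1) /
          (qPoch q C (N + 1) * qPoch q q (N + 1)) = 0 := by
        rw [qPoch_qpow_neg_self q hq N]; simp
      rw [hz, add_zero]
    rw [sub_add_eq_add_sub, h2, ih B C hCN, ih (B * q) (C * q) hCq]
    have hP : (∏ i ∈ Finset.range N, (B * q - C * q * q ^ i))
        = q ^ N * ∏ i ∈ Finset.range N, (B - C * q ^ i) := by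
      rw [Finset.prod_congr rfl (fun i _ => show B * q - C * q * q ^ i = q * (B - C * q ^ i) by ring),
        Finset.prod_mul_distrib, Finset.prod_const, Finset.card_range]
    rw [hP, Finset.prod_range_succ]
    have hfac1 : qPoch q C (N + 1) = qPoch q C N * (1 - C * q ^ N) := qPoch_succ_last _ _ _
    have hfac2 : qPoch q C (N + 1) = qPoch q (C * q) N * (1 - C) := qPoch_succ_first _ _ _
    have hCqN : (1 : ℝ) - C * q ^ N ≠ 0 := by
      rw [hfac1] at hC; exact right_ne_zero_of_mul hC
    have hzpInv : (q : ℝ) ^ (-(N : ℤ)) = (q ^ N)⁻¹ := by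
      rw [zpow_neg, zpow_natCast]
    have hqN : (q : ℝ) ^ N ≠ 0 := pow_ne_zero _ hq
    have h3 : qPoch q (C * q) N = qPoch q C N * (1 - C * q ^ N) / (1 - C) := by
      rw [eq_div_iff hC1]
      rw [← qPoch_succ_first, ← qPoch_succ_last]
    rw [hzpInv, hfac1, h3]
    field_simp
    ring

noncomputable def gb (q : ℝ) (k j : ℕ) : ℝ :=
  if j ≤ k then qPoch q q k / (qPoch q q j * qPoch q q (k - j)) else 0

noncomputable def wsgn (q : ℝ) (j : ℕ) : ℝ := ∏ i ∈ Finset.range j, (-(q ^ i))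

lemma wsgn_zero (q : ℝ) : wsgn q 0 = 1 := by simp [wsgn]
lemma wsgn_succ (q : ℝ) (j : ℕ) : wsgn q (j + 1) = wsgn q j * (-(q ^ j)) :=
  Finset.prod_range_succ _ _

lemma gb_self {q : ℝ} (hq0 : 0 < q) (hq1 : q < 1) (k : ℕ) : gb q k k = 1 := by
  rw [gb, if_pos le_rfl, Nat.sub_self, qPoch_zero]
  rw [mul_one, div_self (qPoch_q_ne_zero hq0 hq1 k)]

lemma gb_zero_right {q : ℝ} (hq0 : 0 < q) (hq1 : q < 1) (k : ℕ) : gb q k 0 = 1 := by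
  rw [gb, if_pos (Nat.zero_le k), qPoch_zero, Nat.sub_zero]
  rw [one_mul, div_self (qPoch_q_ne_zero hq0 hq1 k)]

lemma gb_pascal {q : ℝ} (hq0 : 0 < q) (hq1 : q < 1) {k j : ℕ} (hjk : j ≤ k) :
    gb q (k + 1) (j + 1) = gb q k (j + 1) + q ^ (k - j) * gb q k j := by
  rcases Nat.lt_or_ge j k with hlt | hge
  · -- j < k, so j + 1 ≤ k
    obtain ⟨d, rfl⟩ : ∃ d, k = j + 1 + d := ⟨k - j - 1, by omega⟩
    rw [gb, gb, gb, if_pos (by omega), if_pos (by omega), if_pos (by omega)]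
    have e1 : j + 1 + d + 1 - (j + 1) = d + 1 := by omega
    have e2 : j + 1 + d - (j + 1) = d := by omega
    have e3 : j + 1 + d - j = d + 1 := by omega
    rw [e1, e2, e3]
    have f1 : qPoch q q (j + 1 + d + 1) = qPoch q q (j + 1 + d) * (1 - q * q ^ (j + 1 + d)) :=
      qPoch_succ_last _ _ _
    have f2 : qPoch q q (d + 1) = qPoch q q d * (1 - q * q ^ d) := qPoch_succ_last _ _ _
    have f3 : qPoch q q (j + 1) = qPoch q q j * (1 - q * q ^ j) := qPoch_succ_last _ _ _
    have n1 := qPoch_q_ne_zero hq0 hq1 (j + 1 + d)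
    have n2 := qPoch_q_ne_zero hq0 hq1 d
    have n3 := qPoch_q_ne_zero hq0 hq1 j
    have n4 : (1 : ℝ) - q * q ^ (j + 1 + d) ≠ 0 := by
      have := qPoch_q_ne_zero hq0 hq1 (j + 1 + d + 1)
      rw [f1] at this; exact right_ne_zero_of_mul this
    have n5 : (1 : ℝ) - q * q ^ d ≠ 0 := by
      have := qPoch_q_ne_zero hq0 hq1 (d + 1)
      rw [f2] at this; exact right_ne_zero_of_mul this
    have n6 : (1 : ℝ) - q * q ^ j ≠ 0 := by
      have := qPoch_q_ne_zero hq0 hq1 (j + 1)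
      rw [f3] at this; exact right_ne_zero_of_mul this
    rw [f1, f2, f3]
    field_simp
    ring
  · -- j = k
    have : j = k := le_antisymm hjk hge
    subst this
    rw [gb_self hq0 hq1, gb_self hq0 hq1, Nat.sub_self, pow_zero]
    rw [gb, if_neg (by omega)]
    ring

lemma rothe {q : ℝ} (hq0 : 0 < q) (hq1 : q < 1) (x : ℝ) :
    ∀ k, qPoch q x k = ∑ j ∈ Finset.range (k + 1), wsgn q j * gb q k j * x ^ j := by
  intro k
  induction k with
  | zero => simp [qPoch, wsgn, gb_zero_right hq0 hq1]
  | succ k ih =>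
    have hext : ∑ j ∈ Finset.range (k + 1), wsgn q j * gb q k j * x ^ j
        = ∑ j ∈ Finset.range (k + 2), wsgn q j * gb q k j * x ^ j := by
      conv_rhs => rw [Finset.sum_range_succ]
      rw [show gb q k (k + 1) = 0 from by rw [gb, if_neg (by omega)]]
      simp
    rw [qPoch_succ_last, ih, hext]
    have key : ∑ j ∈ Finset.range (k + 1 + 1), wsgn q j * gb q (k + 1) j * x ^ j
        - ∑ j ∈ Finset.range (k + 2), wsgn q j * gb q k j * x ^ j
        = - (x * q ^ k) * ∑ j ∈ Finset.range (k + 1), wsgn q j * gb q k j * x ^ j := by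
      rw [← Finset.sum_sub_distrib]
      have hbig := Finset.sum_range_succ' (fun j =>
        wsgn q j * gb q (k + 1) j * x ^ j - wsgn q j * gb q k j * x ^ j) (k + 1)
      rw [hbig]
      have h0 : wsgn q 0 * gb q (k + 1) 0 * x ^ 0 - wsgn q 0 * gb q k 0 * x ^ 0 = 0 := by
        rw [gb_zero_right hq0 hq1, gb_zero_right hq0 hq1]; ring
      rw [h0, add_zero, Finset.mul_sum]
      apply Finset.sum_congr rfl
      intro j hj
      have hjk : j ≤ k := by simpa [Nat.lt_succ_iff] using hj
      rw [gb_pascal hq0 hq1 hjk, wsgn_succ]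
      have hpw : q ^ j * q ^ (k - j) = q ^ k := by
        rw [← pow_add]; congr 1; omega
      linear_combination (-(wsgn q j * gb q k j * x ^ (j + 1))) * hpw
    linear_combination (-1 : ℝ) * key + (x * q ^ k) * hext

lemma tri_swap (f : ℕ → ℕ → ℝ) :
    ∀ n : ℕ, ∑ k ∈ Finset.range (n + 1), ∑ j ∈ Finset.range (k + 1), f k j
      = ∑ j ∈ Finset.range (n + 1), ∑ m ∈ Finset.range (n + 1 - j), f (j + m) j := by
  intro n
  induction n with
  | zero => simp
  | succ n ih =>
    rw [Finset.sum_range_succ, ih]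
    have hsplit : ∀ j ∈ Finset.range (n + 1),
        ∑ m ∈ Finset.range (n + 1 + 1 - j), f (j + m) j
          = (∑ m ∈ Finset.range (n + 1 - j), f (j + m) j) + f (n + 1) j := by
      intro j hj
      have hjn : j ≤ n := by simpa [Nat.lt_succ_iff] using hj
      have e1 : n + 1 + 1 - j = (n + 1 - j) + 1 := by omega
      rw [e1, Finset.sum_range_succ]
      congr 2
      omega
    rw [Finset.sum_range_succ (fun j => ∑ m ∈ Finset.range (n + 1 + 1 - j), f (j + m) j)]
    rw [Finset.sum_congr rfl hsplit, Finset.sum_add_distrib]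
    have hlast : ∑ m ∈ Finset.range (n + 1 + 1 - (n + 1)), f (n + 1 + m) (n + 1)
        = f (n + 1) (n + 1) := by
      rw [show n + 1 + 1 - (n + 1) = 1 from by omega]
      simp
    rw [hlast, Finset.sum_range_succ (fun j => f (n + 1) j)]
    ring

lemma claimV (q a b : ℝ) :
    ∀ (n j : ℕ), j ≤ n →
      (∏ i ∈ Finset.range n, (q ^ (n + 1) * a * b - q * a * q ^ i))
        = wsgn q j * q ^ j * a ^ j * qPoch q (b * q) j *
            ∏ i ∈ Finset.range (n - j), (q ^ (n + 1) * a * b * q ^ j - q * a * q ^ j * q ^ i) := by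
  intro n j
  induction j with
  | zero =>
    intro _
    rw [wsgn_zero, qPoch_zero]
    simp
  | succ j ihj =>
    intro hjn
    have hj : j ≤ n := by omega
    have IH := ihj hj
    obtain ⟨d, rfl⟩ : ∃ d, n = j + 1 + d := ⟨n - j - 1, by omega⟩
    have e1 : j + 1 + d - j = d + 1 := by omega
    have e2 : j + 1 + d - (j + 1) = d := by omega
    rw [e1] at IH
    rw [e2]
    rw [Finset.prod_range_succ] at IH
    have hshift : ∏ i ∈ Finset.range d,
        (q ^ (j + 1 + d + 1) * a * b * q ^ (j + 1) - q * a * q ^ (j + 1) * q ^ i)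
        = q ^ d * ∏ i ∈ Finset.range d,
            (q ^ (j + 1 + d + 1) * a * b * q ^ j - q * a * q ^ j * q ^ i) := by
      rw [Finset.prod_congr rfl (fun i _ => show
        q ^ (j + 1 + d + 1) * a * b * q ^ (j + 1) - q * a * q ^ (j + 1) * q ^ i
          = q * (q ^ (j + 1 + d + 1) * a * b * q ^ j - q * a * q ^ j * q ^ i) from by ring),
        Finset.prod_mul_distrib, Finset.prod_const, Finset.card_range]
    rw [hshift, IH, wsgn_succ, qPoch_succ_last]
    ring

set_option maxHeartbeats 800000 in
/-- The big `q`-Jacobi polynomial with `c = 0` reduces to a little `q`-Jacobi polynomial. -/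
theorem bigQJacobi_c_zero_eq_littleQJacobi (n : ℕ) (q a b : ℝ) (hq0 : 0 < q) (hq1 : q < 1)
    (ha : a ≠ 0) (hqa : qPoch q (q * a) n ≠ 0) (hqb : qPoch q (q * b) n ≠ 0) (x : ℝ) :
    bigQJacobi q a b 0 n x =
      bigQJacobi q a b 0 n 0 * littleQJacobi q b a n (x / (q * a)) := by
  have hq : q ≠ 0 := hq0.ne'
  have hqb' : qPoch q (b * q) n ≠ 0 := by rwa [mul_comm b q]
  -- Step 1: expand big q-Jacobi at x via Rothe's formula
  have hBx : bigQJacobi q a b 0 n x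
      = ∑ k ∈ Finset.range (n + 1), ∑ j ∈ Finset.range (k + 1),
          (qPoch q ((q : ℝ) ^ (-(n : ℤ))) k * qPoch q (q ^ (n + 1) * a * b) k * q ^ k /
            (qPoch q (q * a) k * qPoch q q k)) * (wsgn q j * gb q k j * x ^ j) := by
    rw [bigQJacobi]
    apply Finset.sum_congr rfl
    intro k _
    rw [mul_zero, qPoch_zero_arg, rothe hq0 hq1 x k]
    rw [show qPoch q ((q : ℝ) ^ (-(n : ℤ))) k * qPoch q (q ^ (n + 1) * a * b) k *
        (∑ j ∈ Finset.range (k + 1), wsgn q j * gb q k j * x ^ j) * q ^ k /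
        (qPoch q (q * a) k * 1 * qPoch q q k)
      = (qPoch q ((q : ℝ) ^ (-(n : ℤ))) k * qPoch q (q ^ (n + 1) * a * b) k * q ^ k /
          (qPoch q (q * a) k * qPoch q q k)) *
        (∑ j ∈ Finset.range (k + 1), wsgn q j * gb q k j * x ^ j) from by ring]
    rw [Finset.mul_sum]
  -- Step 2: closed form for big q-Jacobi at 0
  have hB0 : bigQJacobi q a b 0 n 0
      = (∏ i ∈ Finset.range n, (q ^ (n + 1) * a * b - q * a * q ^ i)) / qPoch q (q * a) n := by
    rw [bigQJacobi]
    have hc : ∀ k ∈ Finset.range (n + 1),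
        qPoch q ((q : ℝ) ^ (-(n : ℤ))) k * qPoch q (q ^ (n + 1) * a * b) k *
            qPoch q (0 : ℝ) k * q ^ k /
            (qPoch q (q * a) k * qPoch q (q * 0) k * qPoch q q k)
          = qPoch q ((q : ℝ) ^ (-(n : ℤ))) k * qPoch q (q ^ (n + 1) * a * b) k * q ^ k /
            (qPoch q (q * a) k * qPoch q q k) := by
      intro k _
      rw [mul_zero, qPoch_zero_arg]
      ring
    rw [Finset.sum_congr rfl hc]
    exact qVdm q hq0 hq1 n (q ^ (n + 1) * a * b) (q * a) hqa
  -- Step 3: little q-Jacobi rewritten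
  have hlit : littleQJacobi q b a n (x / (q * a))
      = ∑ j ∈ Finset.range (n + 1),
          qPoch q ((q : ℝ) ^ (-(n : ℤ))) j * qPoch q (q ^ (n + 1) * a * b) j /
            (qPoch q (b * q) j * qPoch q q j) * (x ^ j / a ^ j) := by
    rw [littleQJacobi]
    apply Finset.sum_congr rfl
    intro j _
    rw [show b * a * q ^ (n + 1) = q ^ (n + 1) * a * b from by ring]
    rw [show q * (x / (q * a)) = x / a from by field_simp]
    rw [div_pow]
  rw [hBx, tri_swap, hB0, hlit, Finset.mul_sum]
  apply Finset.sum_congr rfl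
  intro j hj'
  have hj : j ≤ n := by simpa [Nat.lt_succ_iff] using hj'
  have hCj : qPoch q (q * a * q ^ j) (n - j) ≠ 0 := qPoch_shift_ne_zero_of_le hqa hj
  have hqaj : qPoch q (q * a) j ≠ 0 := qPoch_ne_zero_of_le hqa hj
  have hbqj : qPoch q (b * q) j ≠ 0 := qPoch_ne_zero_of_le hqb' hj
  have e : n + 1 - j = (n - j) + 1 := by omega
  rw [e]
  have hterm2 : ∀ m ∈ Finset.range ((n - j) + 1),
      (qPoch q ((q : ℝ) ^ (-(n : ℤ))) (j + m) * qPoch q (q ^ (n + 1) * a * b) (j + m) *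
          q ^ (j + m) / (qPoch q (q * a) (j + m) * qPoch q q (j + m))) *
        (wsgn q j * gb q (j + m) j * x ^ j)
      = (wsgn q j * x ^ j *
          (qPoch q ((q : ℝ) ^ (-(n : ℤ))) j * qPoch q (q ^ (n + 1) * a * b) j * q ^ j /
            (qPoch q (q * a) j * qPoch q q j))) *
        (qPoch q ((q : ℝ) ^ (-(n : ℤ)) * q ^ j) m * qPoch q (q ^ (n + 1) * a * b * q ^ j) m *
          q ^ m / (qPoch q (q * a * q ^ j) m * qPoch q q m)) := by
    intro m hm
    have hmn : m ≤ n - j := by simpa [Nat.lt_succ_iff] using hm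
    have hCm : qPoch q (q * a * q ^ j) m ≠ 0 := qPoch_ne_zero_of_le hCj hmn
    rw [gb, if_pos (Nat.le_add_right j m), show j + m - j = m from by omega]
    rw [qPoch_add q ((q : ℝ) ^ (-(n : ℤ))) j m, qPoch_add q (q ^ (n + 1) * a * b) j m,
      qPoch_add q (q * a) j m, qPoch_add q q j m, pow_add q j m]
    have hqj : qPoch q q j ≠ 0 := qPoch_q_ne_zero hq0 hq1 j
    have hqm : qPoch q q m ≠ 0 := qPoch_q_ne_zero hq0 hq1 m
    have hqs : qPoch q (q * q ^ j) m ≠ 0 := by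
      have h1 : qPoch q q (j + m) ≠ 0 := qPoch_q_ne_zero hq0 hq1 (j + m)
      rw [qPoch_add] at h1
      exact right_ne_zero_of_mul h1
    field_simp
    linear_combination (qPoch q (q ^ (-(n:ℤ))) j * qPoch q (q ^ (-(n:ℤ)) * q ^ j) m * qPoch q (q ^ (n + 1) * a * b) j * qPoch q (q ^ j * q ^ (n + 1) * a * b) m * wsgn q j * x ^ j * (qPoch q (a * q) j)⁻¹ * (qPoch q (q ^ j * a * q) m)⁻¹) * mul_inv_cancel₀ (show qPoch q (q ^ j * q) m ≠ 0 by rwa [mul_comm])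
  rw [Finset.sum_congr rfl hterm2, ← Finset.mul_sum]
  have harg : (q : ℝ) ^ (-(n : ℤ)) * q ^ j = (q : ℝ) ^ (-((n - j : ℕ) : ℤ)) := by
    rw [← zpow_natCast q j, ← zpow_add₀ hq]
    congr 1
    have : ((n - j : ℕ) : ℤ) = (n : ℤ) - (j : ℤ) := by
      push_cast [Nat.cast_sub hj]; ring
    omega
  simp only [harg]
  rw [qVdm q hq0 hq1 (n - j) (q ^ (n + 1) * a * b * q ^ j) (q * a * q ^ j) hCj]
  -- final per-j algebra
  have hclaim := claimV q a b n j hj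
  have hsplitn : qPoch q (q * a) n = qPoch q (q * a) j * qPoch q (q * a * q ^ j) (n - j) := by
    have h := qPoch_add q (q * a) j (n - j)
    rwa [show j + (n - j) = n from by omega] at h
  rw [hclaim, hsplitn]
  have hqj : qPoch q q j ≠ 0 := qPoch_q_ne_zero hq0 hq1 j
  have haj : (a : ℝ) ^ j ≠ 0 := pow_ne_zero j ha
  field_simp
end

section
/- Fix a nonnegative integer n and real numbers a, b, c, d such that none of a+b, a+c, a+d lies in {0, −1, …, −(n−1)}. Then for every real x, lim_{q↑1} (1−q)^{−3n} p_n( 1 − ½(1−q)² x ; q^a, q^b, q^c, q^d | q ) = W_n(x; a, b, c, d), where the limit is taken as q tends to 1 from within the interval (0,1). -/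
open Filter Topology Asymptotics

noncomputable def qfac (q t : ℝ) (k : ℕ) : ℝ :=
  ∏ j ∈ Finset.range k, ((1 - q ^ (t + (j : ℝ))) / (1 - q))

lemma tendsto_one_sub_rpow (t : ℝ) :
    Tendsto (fun q : ℝ => (1 - q ^ t) / (1 - q)) (𝓝[Set.Ioo (0:ℝ) 1] 1) (𝓝 t) := by
  have h : HasDerivAt (fun q : ℝ => q ^ t) (t * (1:ℝ) ^ (t - 1)) 1 :=
    Real.hasDerivAt_rpow_const (Or.inl one_ne_zero)
  have h2 := hasDerivAt_iff_tendsto_slope.mp h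
  have h3 : Tendsto (slope (fun q : ℝ => q ^ t) 1) (𝓝[Set.Ioo (0:ℝ) 1] 1)
      (𝓝 (t * (1:ℝ) ^ (t-1))) :=
    h2.mono_left (nhdsWithin_mono _ fun y hy => ne_of_lt hy.2)
  rw [Real.one_rpow, mul_one] at h3
  refine h3.congr fun q => ?_
  rw [slope_def_field, Real.one_rpow]
  rw [show (1:ℝ) - q ^ t = -(q ^ t - 1) by ring, show (1:ℝ) - q = -(q - 1) by ring,
    neg_div_neg_eq]

lemma rpow_tendsto (s : ℝ) :
    Tendsto (fun q : ℝ => q ^ s) (𝓝[Set.Ioo (0:ℝ) 1] 1) (𝓝 1) := by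
  have := (Real.continuousAt_rpow_const 1 s (Or.inl one_ne_zero)).tendsto
  rw [Real.one_rpow] at this
  exact this.mono_left nhdsWithin_le_nhds

lemma qfac_tendsto (t : ℝ) (k : ℕ) :
    Tendsto (fun q : ℝ => qfac q t k) (𝓝[Set.Ioo (0:ℝ) 1] 1) (𝓝 (poch t k)) := by
  unfold qfac poch
  exact tendsto_finset_prod _ fun j _ => tendsto_one_sub_rpow (t + j)

lemma rpow_ne_one' {q : ℝ} (hq0 : 0 < q) (hq1 : q < 1) {t : ℝ} (ht : t ≠ 0) :
    q ^ t ≠ 1 := by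
  rcases ht.lt_or_gt with h | h
  · exact ne_of_gt ((Real.one_lt_rpow_iff_of_pos hq0).mpr (Or.inr ⟨hq1, h⟩))
  · exact ne_of_lt (Real.rpow_lt_one hq0.le hq1 h)

lemma qfac_ne_zero {q : ℝ} (hq0 : 0 < q) (hq1 : q < 1) {t : ℝ} {k : ℕ}
    (ht : ∀ j : ℕ, j < k → t + (j:ℝ) ≠ 0) : qfac q t k ≠ 0 := by
  unfold qfac
  refine Finset.prod_ne_zero_iff.mpr fun j hj => div_ne_zero
    (sub_ne_zero.mpr (Ne.symm (rpow_ne_one' hq0 hq1 (ht j (Finset.mem_range.mp hj)))))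
    (sub_ne_zero.mpr (ne_of_lt hq1).symm)

lemma poch_ne_zero' {t : ℝ} {k : ℕ} (h : ∀ j : ℕ, j < k → t + (j:ℝ) ≠ 0) :
    poch t k ≠ 0 :=
  Finset.prod_ne_zero_iff.mpr fun j hj => h j (Finset.mem_range.mp hj)

lemma qPoch_eq {q : ℝ} (hq0 : 0 < q) (hq1 : q < 1) (t : ℝ) (k : ℕ) :
    qPoch q (q ^ t) k = (1 - q) ^ k * qfac q t k := by
  have hu : (1:ℝ) - q ≠ 0 := sub_ne_zero.mpr (ne_of_lt hq1).symm
  unfold qPoch qfac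
  rw [Finset.prod_div_distrib, Finset.prod_const, Finset.card_range,
    mul_div_cancel₀ _ (pow_ne_zero _ hu)]
  exact Finset.prod_congr rfl fun j _ => by
    rw [← Real.rpow_natCast q j, ← Real.rpow_add hq0]

lemma qPoch_q_eq {q : ℝ} (hq0 : 0 < q) (hq1 : q < 1) (k : ℕ) :
    qPoch q q k = (1 - q) ^ k * qfac q 1 k := by
  have := qPoch_eq hq0 hq1 1 k
  rwa [Real.rpow_one] at this

lemma poch_one_fac (k : ℕ) : poch 1 k = (Nat.factorial k : ℝ) := by
  induction k with
  | zero => simp [poch]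
  | succ m ih =>
    rw [poch, Finset.prod_range_succ, ← poch, ih, Nat.factorial_succ]
    push_cast; ring

lemma prodx_eq {q : ℝ} (hq0 : 0 < q) (hq1 : q < 1) (a x : ℝ) (k : ℕ) :
    ∏ j ∈ Finset.range k,
        (1 - 2 * q ^ a * q ^ j * (1 - (1 - q) ^ 2 * x / 2) + (q ^ a) ^ 2 * q ^ (2 * j)) =
      (1 - q) ^ (2 * k) *
        ∏ j ∈ Finset.range k,
          (((1 - q ^ (a + (j:ℝ))) / (1 - q)) ^ 2 + q ^ (a + (j:ℝ)) * x) := by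
  have hu : (1:ℝ) - q ≠ 0 := sub_ne_zero.mpr (ne_of_lt hq1).symm
  rw [show (1 - q) ^ (2 * k) = ∏ _j ∈ Finset.range k, (1 - q) ^ 2 by
    rw [Finset.prod_const, Finset.card_range, ← pow_mul], ← Finset.prod_mul_distrib]
  refine Finset.prod_congr rfl fun j _ => ?_
  have hy : q ^ a * q ^ j = q ^ (a + (j:ℝ)) := by
    rw [← Real.rpow_natCast q j, ← Real.rpow_add hq0]
  have hy2 : (q ^ a) ^ 2 * q ^ (2 * j) = (q ^ (a + (j:ℝ))) ^ 2 := by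
    rw [mul_comm 2 j, pow_mul, ← mul_pow, hy]
  rw [show 1 - 2 * q ^ a * q ^ j * (1 - (1 - q) ^ 2 * x / 2) + (q ^ a) ^ 2 * q ^ (2 * j)
      = 1 - 2 * (q ^ a * q ^ j) * (1 - (1 - q) ^ 2 * x / 2) + (q ^ a) ^ 2 * q ^ (2 * j) by ring,
    hy, hy2]
  field_simp
  ring

lemma term_cancel (u D E F G H K M p : ℝ) (k : ℕ) (hu : u ≠ 0)
    (hF : F ≠ 0) (hG : G ≠ 0) (hH : H ≠ 0) (hK : K ≠ 0) :
    u ^ k * D * (u ^ k * E) * p / (u ^ k * F * (u ^ k * G) * (u ^ k * H) * (u ^ k * K)) *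
      (u ^ (2 * k) * M) = D * E * p / (F * G * H * K) * M := by
  field_simp
  ring

lemma outer_cancel (u Z A B C S : ℝ) (n : ℕ) (hu : u ≠ 0) :
    u ^ (-(3 * n : ℤ)) * (Z * (u ^ n * A) * (u ^ n * B) * (u ^ n * C) * S) =
      Z * A * B * C * S := by
  rw [show (-(3 * n : ℤ)) = -((3 * n : ℕ) : ℤ) by push_cast; ring, zpow_neg, zpow_natCast]
  field_simp
  ring

/-- Limit from Askey–Wilson polynomials to Wilson polynomials, formula (11) of the paper. -/
theorem askeyWilson_tendsto_wilson (n : ℕ) (a b c d : ℝ)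
    (hab : ∀ k : ℕ, k < n → a + b + (k : ℝ) ≠ 0)
    (hac : ∀ k : ℕ, k < n → a + c + (k : ℝ) ≠ 0)
    (had : ∀ k : ℕ, k < n → a + d + (k : ℝ) ≠ 0) (x : ℝ) :
    Tendsto (fun q : ℝ => (1 - q) ^ (-(3 * n : ℤ)) *
        askeyWilson q (q ^ a) (q ^ b) (q ^ c) (q ^ d) n (1 - (1 - q) ^ 2 * x / 2))
      (𝓝[Set.Ioo (0 : ℝ) 1] 1) (𝓝 (wilson a b c d n x)) := by
  have key : Tendsto (fun q : ℝ =>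
      (q ^ a) ^ (-(n : ℤ)) * qfac q (a + b) n * qfac q (a + c) n * qfac q (a + d) n *
        ∑ k ∈ Finset.range (n + 1),
          qfac q (-(n : ℝ)) k * qfac q ((n : ℝ) + a + b + c + d - 1) k * q ^ k /
            (qfac q (a + b) k * qfac q (a + c) k * qfac q (a + d) k * qfac q 1 k) *
            ∏ j ∈ Finset.range k,
              (((1 - q ^ (a + (j : ℝ))) / (1 - q)) ^ 2 + q ^ (a + (j : ℝ)) * x))
      (𝓝[Set.Ioo (0 : ℝ) 1] 1) (𝓝 (wilson a b c d n x)) := by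
    have hz : Tendsto (fun q : ℝ => (q ^ a) ^ (-(n : ℤ)))
        (𝓝[Set.Ioo (0 : ℝ) 1] 1) (𝓝 1) := by
      have h2 : ContinuousAt (fun y : ℝ => y ^ (-(n : ℤ))) 1 :=
        continuousAt_zpow₀ 1 _ (Or.inl one_ne_zero)
      have := h2.tendsto.comp (rpow_tendsto a)
      simpa [Function.comp_def] using this
    have hterm : ∀ k ∈ Finset.range (n + 1), Tendsto (fun q : ℝ =>
        qfac q (-(n : ℝ)) k * qfac q ((n : ℝ) + a + b + c + d - 1) k * q ^ k /
          (qfac q (a + b) k * qfac q (a + c) k * qfac q (a + d) k * qfac q 1 k) *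
          ∏ j ∈ Finset.range k,
            (((1 - q ^ (a + (j : ℝ))) / (1 - q)) ^ 2 + q ^ (a + (j : ℝ)) * x))
        (𝓝[Set.Ioo (0 : ℝ) 1] 1)
        (𝓝 (poch (-(n : ℝ)) k * poch ((n : ℝ) + a + b + c + d - 1) k /
          (poch (a + b) k * poch (a + c) k * poch (a + d) k * (Nat.factorial k : ℝ)) *
          ∏ j ∈ Finset.range k, ((a + (j : ℝ)) ^ 2 + x))) := by
      intro k hk
      have hkn : k ≤ n := Nat.lt_succ_iff.mp (Finset.mem_range.mp hk)
      have hqk : Tendsto (fun q : ℝ => q ^ k) (𝓝[Set.Ioo (0 : ℝ) 1] 1) (𝓝 1) := by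
        have hc : Tendsto (fun q : ℝ => q ^ k) (𝓝 1) (𝓝 (1 ^ k)) :=
          (continuous_pow k).tendsto 1
        simpa using hc.mono_left (nhdsWithin_le_nhds (s := Set.Ioo (0:ℝ) 1))
      have hM : Tendsto (fun q : ℝ => ∏ j ∈ Finset.range k,
          (((1 - q ^ (a + (j : ℝ))) / (1 - q)) ^ 2 + q ^ (a + (j : ℝ)) * x))
          (𝓝[Set.Ioo (0 : ℝ) 1] 1)
          (𝓝 (∏ j ∈ Finset.range k, ((a + (j : ℝ)) ^ 2 + x))) := by
        refine tendsto_finset_prod _ fun j _ => ?_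
        have h1 := (tendsto_one_sub_rpow (a + (j : ℝ))).pow 2
        have h2 := (rpow_tendsto (a + (j : ℝ))).mul_const x
        simpa using h1.add h2
      have hFne : poch (a + b) k ≠ 0 := poch_ne_zero' fun j hj => hab j (hj.trans_le hkn)
      have hGne : poch (a + c) k ≠ 0 := poch_ne_zero' fun j hj => hac j (hj.trans_le hkn)
      have hHne : poch (a + d) k ≠ 0 := poch_ne_zero' fun j hj => had j (hj.trans_le hkn)
      have hKne : poch 1 k ≠ 0 := poch_ne_zero' fun j _ => by positivity
      have hden := (((qfac_tendsto (a + b) k).mul (qfac_tendsto (a + c) k)).mul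
        (qfac_tendsto (a + d) k)).mul (qfac_tendsto 1 k)
      have hnum := ((qfac_tendsto (-(n : ℝ)) k).mul
        (qfac_tendsto ((n : ℝ) + a + b + c + d - 1) k)).mul hqk
      have hdne : poch (a + b) k * poch (a + c) k * poch (a + d) k * poch 1 k ≠ 0 :=
        mul_ne_zero (mul_ne_zero (mul_ne_zero hFne hGne) hHne) hKne
      have htot := (hnum.div hden hdne).mul hM
      rw [mul_one, poch_one_fac] at htot
      exact htot
    have total := (((hz.mul (qfac_tendsto (a + b) n)).mul (qfac_tendsto (a + c) n)).mul
      (qfac_tendsto (a + d) n)).mul (tendsto_finset_sum _ hterm)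
    rw [one_mul] at total
    simp only [wilson]
    exact total
  refine Tendsto.congr' ?_ key
  filter_upwards [self_mem_nhdsWithin] with q hq
  obtain ⟨hq0, hq1⟩ := hq
  have hu : (1 : ℝ) - q ≠ 0 := sub_ne_zero.mpr (ne_of_lt hq1).symm
  have e2 : q ^ a * q ^ b * q ^ c * q ^ d * (q : ℝ) ^ ((n : ℤ) - 1) =
      q ^ ((n : ℝ) + a + b + c + d - 1) := by
    rw [← Real.rpow_intCast q ((n : ℤ) - 1), ← Real.rpow_add hq0, ← Real.rpow_add hq0,
      ← Real.rpow_add hq0, ← Real.rpow_add hq0]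
    congr 1
    push_cast
    ring
  have e1 : q ^ a * q ^ b = q ^ (a + b) := (Real.rpow_add hq0 a b).symm
  have e1c : q ^ a * q ^ c = q ^ (a + c) := (Real.rpow_add hq0 a c).symm
  have e1d : q ^ a * q ^ d = q ^ (a + d) := (Real.rpow_add hq0 a d).symm
  have e3 : (q : ℝ) ^ (-(n : ℤ)) = q ^ (-(n : ℝ)) := by
    rw [← Real.rpow_intCast q (-(n : ℤ))]
    congr 1
    push_cast
    ring
  have hs : (∑ k ∈ Finset.range (n + 1),
        (1 - q) ^ k * qfac q (-(n : ℝ)) k *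
          ((1 - q) ^ k * qfac q ((n : ℝ) + a + b + c + d - 1) k) * q ^ k /
          ((1 - q) ^ k * qfac q (a + b) k * ((1 - q) ^ k * qfac q (a + c) k) *
            ((1 - q) ^ k * qfac q (a + d) k) * ((1 - q) ^ k * qfac q 1 k)) *
          ((1 - q) ^ (2 * k) * ∏ j ∈ Finset.range k,
            (((1 - q ^ (a + (j : ℝ))) / (1 - q)) ^ 2 + q ^ (a + (j : ℝ)) * x))) =
      ∑ k ∈ Finset.range (n + 1),
        qfac q (-(n : ℝ)) k * qfac q ((n : ℝ) + a + b + c + d - 1) k * q ^ k /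
          (qfac q (a + b) k * qfac q (a + c) k * qfac q (a + d) k * qfac q 1 k) *
          ∏ j ∈ Finset.range k,
            (((1 - q ^ (a + (j : ℝ))) / (1 - q)) ^ 2 + q ^ (a + (j : ℝ)) * x) := by
    refine Finset.sum_congr rfl fun k hk => ?_
    have hkn : k ≤ n := Nat.lt_succ_iff.mp (Finset.mem_range.mp hk)
    exact term_cancel _ _ _ _ _ _ _ _ _ k hu
      (qfac_ne_zero hq0 hq1 fun j hj => hab j (hj.trans_le hkn))
      (qfac_ne_zero hq0 hq1 fun j hj => hac j (hj.trans_le hkn))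
      (qfac_ne_zero hq0 hq1 fun j hj => had j (hj.trans_le hkn))
      (qfac_ne_zero hq0 hq1 fun j _ => by positivity)
  simp only [askeyWilson]
  simp only [e2]
  simp only [e1, e1c, e1d, e3]
  simp only [qPoch_eq hq0 hq1, qPoch_q_eq hq0 hq1, prodx_eq hq0 hq1]
  rw [hs]
  exact (outer_cancel _ _ _ _ _ _ n hu).symm
end

section
/- Fix a nonnegative integer n, a positive integer N ≥ n, and real numbers α, β, δ such that neither α+1 nor β+δ+1 lies in {0, −1, …, −(n−1)}. Then for every real x, lim_{q↑1} R_n( 1 + q^{δ−N} + (1−q)² x ; q^α, q^β, q^{−N−1}, q^δ | q ) = R_n(x; α, β, −N−1, δ), where the limit is taken as q tends to 1 from within (0,1). -/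
open Filter Topology Asymptotics

lemma rpow_slope_tendsto (a : ℝ) :
    Tendsto (fun q : ℝ => (1 - q ^ a) / (1 - q)) (𝓝[Set.Ioo (0:ℝ) 1] 1) (𝓝 a) := by
  have hd : HasDerivAt (fun q : ℝ => q ^ a) (a * (1:ℝ) ^ (a - 1)) 1 :=
    Real.hasDerivAt_rpow_const (Or.inl one_ne_zero)
  rw [Real.one_rpow, mul_one] at hd
  have hs := hasDerivAt_iff_tendsto_slope.mp hd
  have hsub : 𝓝[Set.Ioo (0:ℝ) 1] (1:ℝ) ≤ 𝓝[≠] (1:ℝ) :=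
    nhdsWithin_mono _ (fun q hq => ne_of_lt hq.2)
  refine (hs.mono_left hsub).congr fun q => ?_
  rw [slope_def_field, Real.one_rpow,
    show (1:ℝ) - q ^ a = -(q ^ a - 1) by ring, show (1:ℝ) - q = -(q - 1) by ring,
    neg_div_neg_eq]

lemma qPoch_rpow {q : ℝ} (hq : 0 < q) (c : ℝ) (k : ℕ) :
    qPoch q (q ^ c) k = ∏ j ∈ Finset.range k, (1 - q ^ (c + (j:ℝ))) := by
  unfold qPoch
  refine Finset.prod_congr rfl fun j _ => ?_
  rw [← Real.rpow_natCast q j, ← Real.rpow_add hq]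

lemma prod_one_add_eq_factorial (k : ℕ) :
    (∏ j ∈ Finset.range k, (1 + (j:ℝ))) = (Nat.factorial k : ℝ) := by
  induction k with
  | zero => simp
  | succ m ih => rw [Finset.prod_range_succ, ih, Nat.factorial_succ]; push_cast; ring

lemma combine (U a b c d e f g t : ℝ) (hU : U ≠ 0) :
    a * b * t / (d * e * f) * (c / g)
      = t * (a / U * (b / U) * (c / U ^ 2) / (d / U * (e / U) * (f / U) * (g / U))) := by
  have hU4 : U ^ 4 ≠ 0 := pow_ne_zero _ hU
  have r1 : a / U * (b / U) * (c / U ^ 2) = a * b * c / U ^ 4 := by ring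
  have r2 : d / U * (e / U) * (f / U) * (g / U) = d * e * f * g / U ^ 4 := by ring
  rw [r1, r2, div_div_div_comm, div_self hU4, div_one]
  ring

/-- Limit from `q`-Racah polynomials to Racah polynomials, formula (18) of the paper. -/
theorem qRacah_tendsto_racah (n N : ℕ) (hN : 0 < N) (hnN : n ≤ N) (α β δ : ℝ)
    (hα : ∀ k : ℕ, k < n → α + 1 + (k : ℝ) ≠ 0)
    (hβδ : ∀ k : ℕ, k < n → β + δ + 1 + (k : ℝ) ≠ 0) (x : ℝ) :
    Tendsto (fun q : ℝ => qRacahPoly q (q ^ α) (q ^ β) (q ^ δ) N n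
        (1 + q ^ (δ - (N : ℝ)) + (1 - q) ^ 2 * x))
      (𝓝[Set.Ioo (0 : ℝ) 1] 1) (𝓝 (racah α β δ N n x)) := by

  simp only [qRacahPoly, racah]
  refine tendsto_finset_sum _ fun k hk => ?_
  have hkn : k ≤ n := Nat.lt_succ_iff.mp (Finset.mem_range.mp hk)
  set F : ℝ → ℝ → ℝ := fun a q => (1 - q ^ a) / (1 - q) with hF
  set C : ℕ → ℝ → ℝ := fun j q =>
    (1 - q ^ (j:ℝ)) * (1 - q ^ (δ - (N:ℝ) + (j:ℝ))) - q ^ (j:ℝ) * (1 - q) ^ 2 * x with hC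
  set h : ℕ → ℝ → ℝ := fun j q =>
    (F (-(n:ℝ) + (j:ℝ)) q * F ((n:ℝ) + α + β + 1 + (j:ℝ)) q * (C j q / (1 - q) ^ 2)) /
    (F (α + 1 + (j:ℝ)) q * F (β + δ + 1 + (j:ℝ)) q * F (1 + (j:ℝ)) q * F ((j:ℝ) - (N:ℝ)) q)
    with hh
  set L : ℕ → ℝ := fun j =>
    ((-(n:ℝ) + (j:ℝ)) * ((n:ℝ) + α + β + 1 + (j:ℝ)) * ((j:ℝ) * (δ - (N:ℝ) + (j:ℝ)) - x)) /
    ((α + 1 + (j:ℝ)) * (β + δ + 1 + (j:ℝ)) * (1 + (j:ℝ)) * ((j:ℝ) - (N:ℝ))) with hL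
  have hmem : ∀ᶠ q in 𝓝[Set.Ioo (0:ℝ) 1] (1:ℝ), q ∈ Set.Ioo (0:ℝ) 1 :=
    eventually_mem_nhdsWithin
  -- limits of h j
  have hLj : ∀ j, j < k → Tendsto (h j) (𝓝[Set.Ioo (0:ℝ) 1] 1) (𝓝 (L j)) := by
    intro j hj
    have hjn : j < n := lt_of_lt_of_le hj hkn
    have hC2 : Tendsto (fun q => C j q / (1 - q) ^ 2) (𝓝[Set.Ioo (0:ℝ) 1] 1)
        (𝓝 ((j:ℝ) * (δ - (N:ℝ) + (j:ℝ)) - x)) := by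
      have hx : Tendsto (fun q : ℝ => q ^ (j:ℝ) * x) (𝓝[Set.Ioo (0:ℝ) 1] 1) (𝓝 x) := by
        have h1 : Tendsto (fun q : ℝ => q ^ (j:ℕ)) (𝓝[Set.Ioo (0:ℝ) 1] 1) (𝓝 1) := by
          simpa using ((continuous_pow j).tendsto (1:ℝ)).mono_left nhdsWithin_le_nhds
        have h2 := h1.mul_const x
        rw [one_mul] at h2
        refine h2.congr fun q => ?_
        rw [Real.rpow_natCast]
      have hmain := ((rpow_slope_tendsto (j:ℝ)).mul
        (rpow_slope_tendsto (δ - (N:ℝ) + (j:ℝ)))).sub hx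
      refine hmain.congr' (hmem.mono fun q hq => ?_)
      have hu : (1:ℝ) - q ≠ 0 := by have := hq.2; intro hcon; change q < 1 at this; linarith
      show F (j:ℝ) q * F (δ - (N:ℝ) + (j:ℝ)) q - q ^ (j:ℝ) * x = C j q / (1 - q) ^ 2
      simp only [hF, hC]
      field_simp
    have hd1 : α + 1 + (j:ℝ) ≠ 0 := hα j hjn
    have hd2 : β + δ + 1 + (j:ℝ) ≠ 0 := hβδ j hjn
    have hd3 : (1:ℝ) + (j:ℝ) ≠ 0 := by positivity
    have hd4 : (j:ℝ) - (N:ℝ) ≠ 0 := by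
      have : (j:ℝ) < (N:ℝ) := by exact_mod_cast lt_of_lt_of_le hjn hnN
      intro hcon; linarith
    have hden : (α + 1 + (j:ℝ)) * (β + δ + 1 + (j:ℝ)) * (1 + (j:ℝ)) * ((j:ℝ) - (N:ℝ)) ≠ 0 :=
      mul_ne_zero (mul_ne_zero (mul_ne_zero hd1 hd2) hd3) hd4
    exact (((rpow_slope_tendsto _).mul (rpow_slope_tendsto _)).mul hC2).div
      ((((rpow_slope_tendsto _).mul (rpow_slope_tendsto _)).mul
        (rpow_slope_tendsto _)).mul (rpow_slope_tendsto _)) hden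
  -- limit of q^k * prod h
  have hHk : Tendsto (fun q : ℝ => q ^ k * ∏ j ∈ Finset.range k, h j q)
      (𝓝[Set.Ioo (0:ℝ) 1] 1) (𝓝 (∏ j ∈ Finset.range k, L j)) := by
    have h1 : Tendsto (fun q : ℝ => q ^ k) (𝓝[Set.Ioo (0:ℝ) 1] 1) (𝓝 1) := by
      simpa using ((continuous_pow k).tendsto (1:ℝ)).mono_left nhdsWithin_le_nhds
    have h2 := tendsto_finset_prod (Finset.range k) fun j hj => hLj j (Finset.mem_range.mp hj)
    simpa using h1.mul h2
  -- value equality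
  have hval : (∏ j ∈ Finset.range k, L j) =
      poch (-(n:ℝ)) k * poch ((n:ℝ) + α + β + 1) k /
        (poch (α + 1) k * poch (β + δ + 1) k * poch (-(N:ℝ)) k * (Nat.factorial k : ℝ)) *
        ∏ j ∈ Finset.range k, ((j:ℝ) * (δ - (N:ℝ) + (j:ℝ)) - x) := by
    have hfac := prod_one_add_eq_factorial k
    have hNp : (∏ j ∈ Finset.range k, ((j:ℝ) - (N:ℝ))) = poch (-(N:ℝ)) k := by
      unfold poch; exact Finset.prod_congr rfl fun j _ => by ring
    simp only [hL, poch]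
    rw [Finset.prod_div_distrib]
    simp only [Finset.prod_mul_distrib]
    rw [hfac, hNp]
    unfold poch
    ring
  rw [hval] at hHk
  refine Tendsto.congr' (hmem.mono fun q hq => ?_) hHk
  -- pointwise equality
  obtain ⟨hq0, hq1⟩ := hq
  have hu : (1:ℝ) - q ≠ 0 := by intro hcon; linarith
  show q ^ k * ∏ j ∈ Finset.range k, h j q = _
  beta_reduce
  have e1 : qPoch q ((q:ℝ) ^ (-(n:ℤ))) k
      = ∏ j ∈ Finset.range k, (1 - q ^ (-(n:ℝ) + (j:ℝ))) := by
    rw [show ((q:ℝ) ^ (-(n:ℤ))) = q ^ (-(n:ℝ)) by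
      rw [← Real.rpow_intCast q (-(n:ℤ))]; push_cast; ring_nf]
    exact qPoch_rpow hq0 _ k
  have e2 : qPoch q (q ^ (n + 1) * q ^ α * q ^ β) k
      = ∏ j ∈ Finset.range k, (1 - q ^ ((n:ℝ) + α + β + 1 + (j:ℝ))) := by
    rw [show q ^ (n + 1) * q ^ α * q ^ β = q ^ ((n:ℝ) + α + β + 1) by
      rw [← Real.rpow_natCast q (n + 1), ← Real.rpow_add hq0, ← Real.rpow_add hq0]
      congr 1; push_cast; ring]
    exact qPoch_rpow hq0 _ k
  have e3 : qPoch q (q * q ^ α) k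
      = ∏ j ∈ Finset.range k, (1 - q ^ (α + 1 + (j:ℝ))) := by
    rw [show q * q ^ α = q ^ (α + 1) by
      rw [Real.rpow_add hq0, Real.rpow_one]; ring]
    exact qPoch_rpow hq0 _ k
  have e4 : qPoch q (q * q ^ β * q ^ δ) k
      = ∏ j ∈ Finset.range k, (1 - q ^ (β + δ + 1 + (j:ℝ))) := by
    rw [show q * q ^ β * q ^ δ = q ^ (β + δ + 1) by
      rw [Real.rpow_add hq0, Real.rpow_add hq0, Real.rpow_one]; ring]
    exact qPoch_rpow hq0 _ k
  have e5 : qPoch q q k = ∏ j ∈ Finset.range k, (1 - q ^ (1 + (j:ℝ))) := by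
    unfold qPoch
    refine Finset.prod_congr rfl fun j _ => ?_
    rw [show q * q ^ j = q ^ (1 + (j:ℝ)) by
      rw [Real.rpow_add hq0, Real.rpow_one, Real.rpow_natCast]]
  have e6 : (∏ j ∈ Finset.range k,
        (1 - q ^ j * (1 + q ^ (δ - (N:ℝ)) + (1 - q) ^ 2 * x)
            + (q:ℝ) ^ (2 * (j:ℤ) - (N:ℤ)) * q ^ δ) /
          (1 - (q:ℝ) ^ ((j:ℤ) - (N:ℤ))))
      = ∏ j ∈ Finset.range k, (C j q / (1 - q ^ ((j:ℝ) - (N:ℝ)))) := by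
    refine Finset.prod_congr rfl fun j _ => ?_
    have hden : (q:ℝ) ^ ((j:ℤ) - (N:ℤ)) = q ^ ((j:ℝ) - (N:ℝ)) := by
      rw [← Real.rpow_intCast q ((j:ℤ) - (N:ℤ))]; push_cast; ring_nf
    have h1 : (q:ℝ) ^ (2 * (j:ℤ) - (N:ℤ)) * q ^ δ
        = q ^ ((j:ℝ)) * (q ^ (δ - (N:ℝ)) * q ^ ((j:ℝ))) := by
      rw [← Real.rpow_intCast q (2 * (j:ℤ) - (N:ℤ)), ← Real.rpow_add hq0,
        ← Real.rpow_add hq0, ← Real.rpow_add hq0]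
      congr 1; push_cast; ring
    have h2 : q ^ (j:ℕ) = q ^ ((j:ℝ)) := (Real.rpow_natCast q j).symm
    have h3 : q ^ (δ - (N:ℝ) + (j:ℝ)) = q ^ (δ - (N:ℝ)) * q ^ ((j:ℝ)) :=
      Real.rpow_add hq0 _ _
    rw [hden, h1, h2]
    simp only [hC]
    rw [h3]
    ring
  rw [e1, e2, e3, e4, e5, e6, Finset.prod_div_distrib]
  simp only [hh, hF]
  simp only [Finset.prod_div_distrib, Finset.prod_mul_distrib, Finset.prod_const,
    Finset.card_range]
  rw [show ((1 - q) ^ 2) ^ k = ((1 - q) ^ k) ^ 2 by rw [← pow_mul, mul_comm, pow_mul]]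
  exact (combine ((1 - q) ^ k)
    (∏ j ∈ Finset.range k, (1 - q ^ (-(n:ℝ) + (j:ℝ))))
    (∏ j ∈ Finset.range k, (1 - q ^ ((n:ℝ) + α + β + 1 + (j:ℝ))))
    (∏ j ∈ Finset.range k, C j q)
    (∏ j ∈ Finset.range k, (1 - q ^ (α + 1 + (j:ℝ))))
    (∏ j ∈ Finset.range k, (1 - q ^ (β + δ + 1 + (j:ℝ))))
    (∏ j ∈ Finset.range k, (1 - q ^ (1 + (j:ℝ))))
    (∏ j ∈ Finset.range k, (1 - q ^ ((j:ℝ) - (N:ℝ))))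
    (q ^ k) (pow_ne_zero _ hu)).symm
end
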